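/- arXiv:2406.14907 — 10 statements merged into one kernel-verified Lean document; each statement's English description precedes it below -/
import Mathlib

section
/- If a fractional committee $\vec{p}$ satisfies group resource proportionality, then it satisfies Strong UFS: for every group $S \subseteq N$ of voters all having the same approval set $A$ (i.e., $A_i = A$ for all $i \in S$), and every $i \in S$, we have $\sum_{c \in A} p_c \geq \min\{|S| \cdot k/n, |A|\}$. -/
open Finset

/-- The penalty term in the GRP lower bound for a group `S` of voters:
`max_{T ⊆ S} (|T| * k / n - |⋃_{i ∈ T} A i|)`. -/
noncomputable def grpPenalty {C : Type*} [DecidableEq C] (n k : ℕ)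
    (A : Fin n → Finset C) (S : Finset (Fin n)) : ℝ :=
  S.powerset.sup' ⟨∅, Finset.empty_mem_powerset S⟩
    fun T => (T.card : ℝ) * k / n - ((T.sup A).card : ℝ)

/-- Group resource proportionality: for every group `S` of voters, the probability mass on
candidates approved by some member of `S` is at least `|S| * k / n` minus the penalty. -/
def GRP {C : Type*} [DecidableEq C] (n k : ℕ) (A : Fin n → Finset C) (p : C → ℝ) : Prop :=
  ∀ S : Finset (Fin n),
    (S.card : ℝ) * k / n - grpPenalty n k A S ≤ ∑ c ∈ S.sup A, p c

/-- GRP implies Strong UFS: for every group `S` of voters all sharing the same approval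
set, each member `i` of `S` receives utility at least `min (|S| * k / n) |A i|`. -/
theorem grp_implies_strong_ufs {C : Type*} [Fintype C] [DecidableEq C]
    (n k : ℕ) (hn : 0 < n) (hk : k ≤ Fintype.card C)
    (A : Fin n → Finset C) (p : C → ℝ)
    (hp0 : ∀ c, 0 ≤ p c) (hp1 : ∀ c, p c ≤ 1)
    (hsum : ∑ c, p c = (k : ℝ))
    (hgrp : GRP n k A p) :
    ∀ S : Finset (Fin n), (∀ i ∈ S, ∀ j ∈ S, A i = A j) →
      ∀ i ∈ S, min ((S.card : ℝ) * k / n) ((A i).card : ℝ) ≤ ∑ c ∈ A i, p c := by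
  intro S hSA i hi
  have hS : S.Nonempty := ⟨i, hi⟩
  have hsupT : ∀ T ⊆ S, T.Nonempty → T.sup A = A i := by
    intro T hTS ⟨j, hj⟩
    have : ∀ t ∈ T, A t = A i := fun t ht => hSA t (hTS ht) i hi
    calc T.sup A = T.sup (fun _ => A i) := Finset.sup_congr rfl this
    _ = A i := Finset.sup_const ⟨j, hj⟩ _
  have hsupS : S.sup A = A i := hsupT S le_rfl hS
  have hpen : grpPenalty n k A S ≤ max 0 ((S.card : ℝ) * k / n - ((A i).card : ℝ)) := by
    apply Finset.sup'_le
    intro T hT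
    rw [Finset.mem_powerset] at hT
    rcases T.eq_empty_or_nonempty with rfl | hTne
    · simp
    · rw [hsupT T hT hTne]
      refine le_max_of_le_right (sub_le_sub_right ?_ _)
      have : (T.card : ℝ) ≤ S.card := by exact_mod_cast Finset.card_le_card hT
      have hn' : (0:ℝ) ≤ k / n := by positivity
      calc (T.card : ℝ) * k / n = T.card * (k / n) := by ring
        _ ≤ S.card * (k / n) := by nlinarith
        _ = (S.card : ℝ) * k / n := by ring
  have := hgrp S
  rw [hsupS] at this
  have h2 : (S.card : ℝ) * k / n - max 0 ((S.card : ℝ) * k / n - ((A i).card : ℝ))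
      ≤ ∑ c ∈ A i, p c := le_trans (by linarith) this
  rcases le_total ((S.card : ℝ) * k / n) ((A i).card : ℝ) with h | h
  · rw [min_eq_left h]
    have : max 0 ((S.card : ℝ) * k / n - ((A i).card : ℝ)) = 0 := max_eq_left (by linarith)
    linarith [this ▸ h2]
  · rw [min_eq_right h]
    have : max 0 ((S.card : ℝ) * k / n - ((A i).card : ℝ)) = _ := max_eq_right (by linarith)
    linarith [this ▸ h2]
end

section
/- If a fractional committee $\vec{p}$ satisfies group resource proportionality, then it satisfies group fair share (GFS): for every $S \subseteq N$, $\sum_{c \in \bigcup_{i \in S} A_i} p_c \geq \frac{1}{n} \sum_{i \in S} \min\{k, |A_i|\}$. -/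
open Finset

/-- GRP implies GFS: for every group `S` of voters, the probability mass on candidates
approved by some member of `S` is at least `(1/n) * ∑_{i ∈ S} min k |A i|`. -/
theorem grp_implies_gfs {C : Type*} [Fintype C] [DecidableEq C]
    (n k : ℕ) (hn : 0 < n) (hk : k ≤ Fintype.card C)
    (A : Fin n → Finset C) (p : C → ℝ)
    (hp0 : ∀ c, 0 ≤ p c) (hp1 : ∀ c, p c ≤ 1)
    (hsum : ∑ c, p c = (k : ℝ))
    (hgrp : GRP n k A p) :
    ∀ S : Finset (Fin n),
      (1 / (n : ℝ)) * ∑ i ∈ S, min (k : ℝ) ((A i).card : ℝ) ≤ ∑ c ∈ S.sup A, p c := by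
  intro S
  refine le_trans ?_ (hgrp S)
  have hn' : (0:ℝ) < n := by exact_mod_cast hn
  obtain ⟨T, hT, hTeq⟩ := Finset.exists_mem_eq_sup' (⟨∅, Finset.empty_mem_powerset S⟩ :
      S.powerset.Nonempty)
    (fun T => (T.card : ℝ) * k / n - ((T.sup A).card : ℝ))
  rw [grpPenalty, hTeq]
  have hTS : T ⊆ S := Finset.mem_powerset.mp hT
  set U : ℝ := ((T.sup A).card : ℝ) with hU
  have hU0 : (0:ℝ) ≤ U := by positivity
  have hTn : (T.card : ℝ) ≤ n := by
    have : T.card ≤ n := by simpa using Finset.card_le_univ T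
    exact_mod_cast this
  have hsubT : ∑ i ∈ T, min (k:ℝ) ((A i).card : ℝ) ≤ (T.card : ℝ) * U := by
    calc ∑ i ∈ T, min (k:ℝ) ((A i).card : ℝ) ≤ ∑ _i ∈ T, U := by
          refine Finset.sum_le_sum fun i hi => (min_le_right _ _).trans ?_
          rw [hU]
          exact_mod_cast Finset.card_le_card (Finset.le_sup (f := A) hi)
      _ = (T.card : ℝ) * U := by rw [Finset.sum_const, nsmul_eq_mul]
  have hsubS : ∑ i ∈ S \ T, min (k:ℝ) ((A i).card : ℝ) ≤ ((S \ T).card : ℝ) * k := by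
    calc ∑ i ∈ S \ T, min (k:ℝ) ((A i).card : ℝ) ≤ ∑ _i ∈ S \ T, (k:ℝ) :=
          Finset.sum_le_sum fun i _ => min_le_left _ _
      _ = _ := by rw [Finset.sum_const, nsmul_eq_mul]
  have hcard : ((S \ T).card : ℝ) = (S.card : ℝ) - (T.card : ℝ) := by
    rw [Finset.card_sdiff_of_subset hTS]
    exact_mod_cast Nat.cast_sub (Finset.card_le_card hTS)
  have hsplit : ∑ i ∈ S \ T, min (k:ℝ) ((A i).card : ℝ)
      + ∑ i ∈ T, min (k:ℝ) ((A i).card : ℝ) = ∑ i ∈ S, min (k:ℝ) ((A i).card : ℝ) :=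
    Finset.sum_sdiff hTS
  have hX : ∑ i ∈ S, min (k:ℝ) ((A i).card : ℝ)
      ≤ (S.card : ℝ) * k - (T.card : ℝ) * k + n * U := by nlinarith
  have key : (∑ i ∈ S, min (k:ℝ) ((A i).card : ℝ)) / n
      ≤ ((S.card : ℝ) * k - (T.card : ℝ) * k + n * U) / n := by
    gcongr
  calc (1 / (n:ℝ)) * ∑ i ∈ S, min (k:ℝ) ((A i).card : ℝ)
      = (∑ i ∈ S, min (k:ℝ) ((A i).card : ℝ)) / n := by ring
    _ ≤ ((S.card : ℝ) * k - (T.card : ℝ) * k + n * U) / n := key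
    _ = (S.card : ℝ) * k / n - ((T.card : ℝ) * k / n - U) := by
        field_simp
        ring
end

section
/- If a fractional committee $\vec{p}$ satisfies strict fractional core, then it satisfies group resource proportionality. -/
open Finset

/-- Strict fractional core: there is no group `S` of voters and fractional committee `q`
of size at most `|S| * k / n` weakly preferred by all of `S` and strictly by some member. -/
def StrictFractionalCore {C : Type*} [Fintype C] (n k : ℕ)
    (A : Fin n → Finset C) (p : C → ℝ) : Prop :=
  ¬ ∃ (S : Finset (Fin n)) (q : C → ℝ),
      (∀ c, 0 ≤ q c ∧ q c ≤ 1) ∧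
      (∑ c, q c ≤ (S.card : ℝ) * k / n) ∧
      (∀ i ∈ S, ∑ c ∈ A i, p c ≤ ∑ c ∈ A i, q c) ∧
      (∃ i ∈ S, ∑ c ∈ A i, p c < ∑ c ∈ A i, q c)

/-- Strict fractional core implies group resource proportionality. -/
theorem strict_core_implies_grp {C : Type*} [Fintype C] [DecidableEq C]
    (n k : ℕ) (hn : 0 < n) (hk : k ≤ Fintype.card C)
    (A : Fin n → Finset C) (p : C → ℝ)
    (hp0 : ∀ c, 0 ≤ p c) (hp1 : ∀ c, p c ≤ 1)
    (hsum : ∑ c, p c = (k : ℝ))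
    (hcore : StrictFractionalCore n k A p) :
    GRP n k A p := by
  intro S
  by_contra h
  push_neg at h
  have hP0 : 0 ≤ grpPenalty n k A S := by
    have h := Finset.le_sup' (f := fun T : Finset (Fin n) =>
      (T.card : ℝ) * k / n - ((T.sup A).card : ℝ)) (Finset.empty_mem_powerset S)
    simp only [Finset.card_empty, Nat.cast_zero, Finset.sup_empty,
      Finset.bot_eq_empty, zero_mul, zero_div, sub_zero] at h
    rw [grpPenalty]
    linarith
  have hPS : (S.card : ℝ) * k / n - ((S.sup A).card : ℝ) ≤ grpPenalty n k A S := by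
    have h := Finset.le_sup' (f := fun T : Finset (Fin n) =>
      (T.card : ℝ) * k / n - ((T.sup A).card : ℝ)) (Finset.mem_powerset_self S)
    rw [grpPenalty]
    exact h
  have hltB : ∑ c ∈ S.sup A, p c < (S.card : ℝ) * k / n := by linarith
  have hltU : ∑ c ∈ S.sup A, p c < ((S.sup A).card : ℝ) := by linarith
  have hex : ∃ c ∈ S.sup A, p c < 1 := by
    by_contra hx
    push_neg at hx
    have : ((S.sup A).card : ℝ) ≤ ∑ c ∈ S.sup A, p c := by
      calc ((S.sup A).card : ℝ) = ∑ _c ∈ S.sup A, (1 : ℝ) := by simp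
        _ ≤ ∑ c ∈ S.sup A, p c := Finset.sum_le_sum fun c hc => hx c hc
    linarith
  obtain ⟨c₀, hc₀U, hc₀⟩ := hex
  obtain ⟨i₀, hi₀S, hi₀⟩ := Finset.mem_sup.mp hc₀U
  set δ : ℝ := min (1 - p c₀) ((S.card : ℝ) * k / n - ∑ c ∈ S.sup A, p c) with hδ
  have hδ1 : δ ≤ 1 - p c₀ := min_le_left _ _
  have hδ2 : δ ≤ (S.card : ℝ) * k / n - ∑ c ∈ S.sup A, p c := min_le_right _ _
  have hδpos : 0 < δ := lt_min (by linarith) (by linarith)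
  set q : C → ℝ := fun c => (if c ∈ S.sup A then p c else 0) + (if c = c₀ then δ else 0)
    with hq
  have hqsum : ∀ i ∈ S, ∑ c ∈ A i, q c
      = ∑ c ∈ A i, p c + (if c₀ ∈ A i then δ else 0) := by
    intro i hiS
    have hsub : A i ⊆ S.sup A := Finset.le_sup hiS
    have : ∑ c ∈ A i, q c = ∑ c ∈ A i, (p c + (if c = c₀ then δ else 0)) := by
      refine Finset.sum_congr rfl fun c hc => ?_
      simp only [hq]
      rw [if_pos (hsub hc)]
    rw [this, Finset.sum_add_distrib, Finset.sum_ite_eq' (A i) c₀ (fun _ => δ)]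
  apply hcore
  refine ⟨S, q, ?_, ?_, ?_, ⟨i₀, hi₀S, ?_⟩⟩
  · intro c
    constructor
    · simp only [hq]
      split_ifs <;> [linarith [hp0 c]; linarith [hp0 c]; linarith; linarith]
    · simp only [hq]
      split_ifs with h1 h2 h2
      · rw [h2]; linarith
      · linarith [hp1 c]
      · linarith [hp0 c₀]
      · linarith
  · have : ∑ c, q c = ∑ c ∈ S.sup A, p c + δ := by
      simp only [hq]
      rw [Finset.sum_add_distrib]
      congr 1
      · rw [Finset.sum_ite_mem, Finset.univ_inter]
      · rw [Finset.sum_ite_eq' Finset.univ c₀ (fun _ => δ)]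
        simp
    rw [this]; linarith
  · intro i hiS
    rw [hqsum i hiS]
    split_ifs <;> linarith
  · rw [hqsum i₀ hi₀S, if_pos hi₀]
    linarith
end

section
/- If an integral committee $W$ (viewed as the fractional committee $\vec{1}_W$) satisfies group resource proportionality, then it satisfies proportional justified representation (PJR): for every positive integer $\ell$ and every $\ell$-cohesive group $N' \subseteq N$, it holds that $|W \cap \bigcup_{i \in N'} A_i| \geq \ell$. -/
open Finset

/-- An integral committee satisfying GRP satisfies proportional justified representation:
for every positive `ℓ` and every `ℓ`-cohesive group `N'` (i.e. `|N'| ≥ ℓ * n / k` and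
`|⋂_{i ∈ N'} A i| ≥ ℓ`), at least `ℓ` selected candidates are approved by some member. -/
theorem grp_implies_pjr {C : Type*} [Fintype C] [DecidableEq C]
    (n k : ℕ) (hn : 0 < n) (hk : 0 < k) (hkC : k ≤ Fintype.card C)
    (A : Fin n → Finset C) (W : Finset C) (hW : W.card = k)
    (hgrp : GRP n k A (fun c => if c ∈ W then (1 : ℝ) else 0)) :
    ∀ ℓ : ℕ, 0 < ℓ → ∀ N' : Finset (Fin n),
      ((ℓ : ℝ) * n / k ≤ (N'.card : ℝ)) → (ℓ ≤ (N'.inf A).card) →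
      ℓ ≤ (W ∩ N'.sup A).card := by
  intro ℓ hℓ N' hsize hcoh
  have hkn : (0 : ℝ) < (k : ℝ) / n := by positivity
  -- |N'| * k / n ≥ ℓ
  have hNl : (ℓ : ℝ) ≤ (N'.card : ℝ) * k / n := by
    rw [div_le_iff₀ (by positivity : (0:ℝ) < k)] at hsize
    rw [le_div_iff₀ (by positivity : (0:ℝ) < n)]
    nlinarith
  -- penalty bound
  have hpen : grpPenalty n k A N' ≤ (N'.card : ℝ) * k / n - ℓ := by
    apply Finset.sup'_le
    intro T hT
    rw [Finset.mem_powerset] at hT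
    rcases T.eq_empty_or_nonempty with rfl | ⟨i, hi⟩
    · simp only [Finset.card_empty, Finset.sup_empty]
      simp only [Finset.bot_eq_empty, Finset.card_empty, Nat.cast_zero, zero_mul, zero_div,
        sub_zero]
      linarith
    · have h1 : N'.inf A ⊆ T.sup A := by
        have ha : N'.inf A ≤ A i := Finset.inf_le (hT hi)
        have hb : A i ≤ T.sup A := Finset.le_sup hi
        exact ha.trans hb
      have h2 : (ℓ : ℝ) ≤ ((T.sup A).card : ℝ) := by
        exact_mod_cast hcoh.trans (Finset.card_le_card h1)
      have h3 : (T.card : ℝ) * k / n ≤ (N'.card : ℝ) * k / n := by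
        have : (T.card : ℝ) ≤ (N'.card : ℝ) := by
          exact_mod_cast Finset.card_le_card hT
        apply div_le_div_of_nonneg_right _ (by positivity)
        · nlinarith
      linarith
  have hgs := hgrp N'
  have hsum : (∑ c ∈ N'.sup A, (fun c => if c ∈ W then (1 : ℝ) else 0) c)
      = ((W ∩ N'.sup A).card : ℝ) := by
    simp only [Finset.sum_boole]
    congr 1
    rw [Finset.filter_mem_eq_inter, Finset.inter_comm]
  rw [hsum] at hgs
  have : (ℓ : ℝ) ≤ ((W ∩ N'.sup A).card : ℝ) := by linarith
  exact_mod_cast this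
end

section
/- Fractional core does not imply GRP: there exists an instance (with 4 voters, 3 candidates, committee size $k = 2$) and a fractional committee satisfying fractional core that violates group resource proportionality. Concretely, with approval sets $A_1 = \{a\}$, $A_2 = A_3 = \{a, b\}$, $A_4 = \{c\}$, the fractional committee $p_a = 1, p_b = 1/3, p_c = 2/3$ satisfies fractional core but violates GRP for the group $S = \{1, 2, 3\}$. -/
open Finset

/-- Fractional core: no nonempty group `S` of voters has a blocking fractional deviation
`q` of total size at most `|S| * k / n` strictly preferred by every member of `S`. -/
def FractionalCore {C : Type*} [Fintype C] (n k : ℕ)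
    (A : Fin n → Finset C) (p : C → ℝ) : Prop :=
  ¬ ∃ (S : Finset (Fin n)) (q : C → ℝ), S.Nonempty ∧
      (∀ c, 0 ≤ q c ∧ q c ≤ 1) ∧
      (∑ c, q c ≤ (S.card : ℝ) * k / n) ∧
      (∀ i ∈ S, ∑ c ∈ A i, p c < ∑ c ∈ A i, q c)

lemma penalty_eq_zero :
    grpPenalty 4 2 (![{0}, {0, 1}, {0, 1}, {2}] : Fin 4 → Finset (Fin 3)) {0, 1, 2} = 0 := by
  unfold grpPenalty
  apply le_antisymm
  · apply Finset.sup'_le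
    intro T hT
    fin_cases hT <;>
      norm_num [Finset.sup_insert, Finset.sup_singleton, Finset.sup_empty] <;>
      first
        | decide
        | exact le_trans (by norm_num : (1:ℝ)/2 ≤ 1) (Nat.one_le_cast.mpr (by decide))
        | exact le_trans (by norm_num : (3:ℝ)/2 ≤ 2) (Nat.ofNat_le_cast.mpr (by decide))
  · have := Finset.le_sup' (f := fun T => ((T.card : ℝ) * 2 / 4 -
      (((T.sup (![{0}, {0, 1}, {0, 1}, {2}] : Fin 4 → Finset (Fin 3))).card : ℝ))))
      (Finset.empty_mem_powerset ({0,1,2} : Finset (Fin 4)))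
    simpa using this

lemma grp_violation :
    (∑ c ∈ (({0, 1, 2} : Finset (Fin 4)).sup
          (![{0}, {0, 1}, {0, 1}, {2}] : Fin 4 → Finset (Fin 3))),
        (![1, 1/3, 2/3] : Fin 3 → ℝ) c <
      ((({0, 1, 2} : Finset (Fin 4)).card : ℝ) * 2 / 4 -
        grpPenalty 4 2 (![{0}, {0, 1}, {0, 1}, {2}] : Fin 4 → Finset (Fin 3)) {0, 1, 2})) := by
  rw [penalty_eq_zero,
    show (({0, 1, 2} : Finset (Fin 4)).sup
      (![{0}, {0, 1}, {0, 1}, {2}] : Fin 4 → Finset (Fin 3))) = {0, 1} from by decide,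
    Finset.sum_pair (by decide : (0 : Fin 3) ≠ 1),
    show ({0, 1, 2} : Finset (Fin 4)).card = 3 from by decide]
  norm_num

/-- Fractional core does not imply GRP: with 4 voters, 3 candidates `a = 0`, `b = 1`,
`c = 2`, committee size `k = 2`, approvals `A₁ = {a}`, `A₂ = A₃ = {a,b}`, `A₄ = {c}`, the
fractional committee `(1, 1/3, 2/3)` satisfies fractional core but violates GRP for the
group `S = {1,2,3}` (indexed `{0,1,2}`). -/
theorem fractional_core_not_implies_grp :
    FractionalCore 4 2 (![{0}, {0, 1}, {0, 1}, {2}] : Fin 4 → Finset (Fin 3))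
      (![1, 1/3, 2/3] : Fin 3 → ℝ) ∧
    (∑ c ∈ (({0, 1, 2} : Finset (Fin 4)).sup
          (![{0}, {0, 1}, {0, 1}, {2}] : Fin 4 → Finset (Fin 3))),
        (![1, 1/3, 2/3] : Fin 3 → ℝ) c <
      ((({0, 1, 2} : Finset (Fin 4)).card : ℝ) * 2 / 4 -
        grpPenalty 4 2 (![{0}, {0, 1}, {0, 1}, {2}] : Fin 4 → Finset (Fin 3)) {0, 1, 2})) ∧
    ¬ GRP 4 2 (![{0}, {0, 1}, {0, 1}, {2}] : Fin 4 → Finset (Fin 3))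
      (![1, 1/3, 2/3] : Fin 3 → ℝ) := by
  refine ⟨?_, grp_violation, fun h => absurd (h {0, 1, 2}) (not_le.mpr grp_violation)⟩
  rintro ⟨S, q, hS, hq01, hbud, hblock⟩
  -- basic facts about q
  have hq0 := hq01 0
  have hq1 := hq01 1
  have hq2 := hq01 2
  have hsum : ∑ c, q c = q 0 + q 1 + q 2 := by
    rw [Fin.sum_univ_three]
  -- voter 0 cannot be in S
  have h0 : (0 : Fin 4) ∉ S := by
    intro h0
    have := hblock 0 h0
    simp only [Matrix.cons_val_zero, Finset.sum_singleton] at this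
    linarith
  -- consequences of membership of voters 1/2 and 3
  have h12 : ((1 : Fin 4) ∈ S ∨ (2 : Fin 4) ∈ S) → 4/3 < q 0 + q 1 := by
    rintro (h | h)
    · have := hblock 1 h
      rw [show (![{0}, {0, 1}, {0, 1}, {2}] : Fin 4 → Finset (Fin 3)) 1 = {0, 1} from rfl,
        Finset.sum_pair (by decide : (0 : Fin 3) ≠ 1),
        Finset.sum_pair (by decide : (0 : Fin 3) ≠ 1)] at this
      simp only [Matrix.cons_val_zero, Matrix.cons_val_one, Matrix.head_cons] at this
      linarith
    · have := hblock 2 h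
      rw [show (![{0}, {0, 1}, {0, 1}, {2}] : Fin 4 → Finset (Fin 3)) 2 = {0, 1} from rfl,
        Finset.sum_pair (by decide : (0 : Fin 3) ≠ 1),
        Finset.sum_pair (by decide : (0 : Fin 3) ≠ 1)] at this
      simp only [Matrix.cons_val_zero, Matrix.cons_val_one, Matrix.head_cons] at this
      linarith
  have h3 : (3 : Fin 4) ∈ S → 2/3 < q 2 := by
    intro h
    have := hblock 3 h
    rw [show (![{0}, {0, 1}, {0, 1}, {2}] : Fin 4 → Finset (Fin 3)) 3 = {2} from rfl,
      Finset.sum_singleton, Finset.sum_singleton] at this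
    simpa using this
  by_cases hm3 : (3 : Fin 4) ∈ S
  · by_cases hm12 : (1 : Fin 4) ∈ S ∨ (2 : Fin 4) ∈ S
    · -- budget ≤ 2, but total mass > 2
      have hc : S.card ≤ 4 := le_trans (Finset.card_le_univ S) (by decide)
      have hc' : (S.card : ℝ) ≤ 4 := by exact_mod_cast hc
      have := h12 hm12
      have := h3 hm3
      linarith [hbud, hsum ▸ hbud]
    · push_neg at hm12
      have hsub : S ⊆ {3} := by
        intro x hx
        fin_cases x <;> simp_all
      have hc : S.card ≤ 1 := le_trans (Finset.card_le_card hsub) (by decide)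
      have hc' : (S.card : ℝ) ≤ 1 := by exact_mod_cast hc
      have := h3 hm3
      linarith [hsum ▸ hbud]
  · by_cases hm12 : (1 : Fin 4) ∈ S ∨ (2 : Fin 4) ∈ S
    · have hsub : S ⊆ {1, 2} := by
        intro x hx
        fin_cases x <;> simp_all
      have hc : S.card ≤ 2 := le_trans (Finset.card_le_card hsub) (by decide)
      have hc' : (S.card : ℝ) ≤ 2 := by exact_mod_cast hc
      have := h12 hm12
      linarith [hsum ▸ hbud]
    · push_neg at hm12
      obtain ⟨i, hi⟩ := hS
      fin_cases i <;> simp_all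
end

section
/- A fractional committee given by a maximum flow satisfies GRP: if $f$ is a maximum flow on the network representation $\mathcal{N}$ of a committee voting instance, then the fractional committee $\vec{p}$ defined by $p_c = f(c, t)$ for each candidate $c$ satisfies group resource proportionality. -/
open Finset

/-- A feasible flow on the network representation of a committee voting instance, encoded
by the voter-to-candidate flows `x i c` (flow is only allowed on arcs `(i, c)` with
`c ∈ A i`; the source-to-voter flow is `∑ c, x i c ≤ k/n` and the candidate-to-sink flow
is `∑ i, x i c ≤ 1`, so conservation holds by definition). -/
def IsFeasibleFlow {C : Type*} [Fintype C] (n k : ℕ) (A : Fin n → Finset C)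
    (x : Fin n → C → ℝ) : Prop :=
  (∀ i c, 0 ≤ x i c) ∧ (∀ i c, c ∉ A i → x i c = 0) ∧
    (∀ i, ∑ c, x i c ≤ (k : ℝ) / n) ∧ (∀ c, ∑ i, x i c ≤ 1)

/-- The value of a flow. -/
def flowValue {C : Type*} [Fintype C] {n : ℕ} (x : Fin n → C → ℝ) : ℝ :=
  ∑ i, ∑ c, x i c

/-- A maximum flow on the network representation. -/
def IsMaxFlow {C : Type*} [Fintype C] (n k : ℕ) (A : Fin n → Finset C)
    (x : Fin n → C → ℝ) : Prop :=
  IsFeasibleFlow n k A x ∧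
    ∀ y, IsFeasibleFlow n k A y → flowValue y ≤ flowValue x

section Aux

variable {C : Type*} [Fintype C] [DecidableEq C]

/-- Residual reachability from a deficient voter. -/
inductive Reach (n k : ℕ) (A : Fin n → Finset C) (x : Fin n → C → ℝ) : Fin n ⊕ C → Prop
  | base (i : Fin n) (h : ∑ c, x i c < (k : ℝ) / n) : Reach n k A x (.inl i)
  | toC (i : Fin n) (c : C) (h : Reach n k A x (.inl i)) (hc : c ∈ A i) :
      Reach n k A x (.inr c)
  | toV (i : Fin n) (c : C) (h : Reach n k A x (.inr c)) (hp : 0 < x i c) :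
      Reach n k A x (.inl i)

lemma reach_aug {n k : ℕ} {A : Fin n → Finset C} {x : Fin n → C → ℝ}
    (hfeas : IsFeasibleFlow n k A x) :
    ∀ z, Reach n k A x z →
      Sum.elim
        (fun i => ∃ ε : ℝ, 0 < ε ∧ ∃ K : ℝ, 0 ≤ K ∧ ∀ δ : ℝ, 0 < δ → δ ≤ ε →
          ∃ y : Fin n → C → ℝ,
          (∀ j c, 0 ≤ y j c) ∧ (∀ j c, c ∉ A j → y j c = 0) ∧
          (∀ j, ∑ c, y j c ≤ (k : ℝ) / n) ∧
          (∑ c, y i c ≤ (k : ℝ) / n - δ) ∧ (∀ c, ∑ j, y j c = ∑ j, x j c) ∧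
          (∀ j c, x j c - K * δ ≤ y j c))
        (fun c => ∃ ε : ℝ, 0 < ε ∧ ∃ K : ℝ, 0 ≤ K ∧ ∀ δ : ℝ, 0 < δ → δ ≤ ε →
          ∃ y : Fin n → C → ℝ,
          (∀ j c', 0 ≤ y j c') ∧ (∀ j c', c' ∉ A j → y j c' = 0) ∧
          (∀ j, ∑ c', y j c' ≤ (k : ℝ) / n) ∧
          (∀ c', c' ≠ c → ∑ j, y j c' = ∑ j, x j c') ∧
          (∑ j, y j c = ∑ j, x j c + δ) ∧
          (∀ j c', x j c' - K * δ ≤ y j c')) z := by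
  obtain ⟨hnn, hsupp, hvcap, hccap⟩ := hfeas
  intro z hz
  induction hz with
  | base i h =>
    refine ⟨(k : ℝ) / n - ∑ c, x i c, by linarith, 0, le_refl 0, fun δ hδ hδε => ?_⟩
    exact ⟨x, hnn, hsupp, hvcap, by linarith, fun c => rfl,
      fun j c => by simp⟩
  | toC i c h hc ih =>
    obtain ⟨ε, hε, K, hK, hmain⟩ := ih
    refine ⟨ε, hε, K, hK, fun δ hδ hδε => ?_⟩
    obtain ⟨y, ynn, ysupp, yvcap, yicap, ycsum, ylb⟩ := hmain δ hδ hδε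
    refine ⟨fun j c' => y j c' + if j = i ∧ c' = c then δ else 0, ?_, ?_, ?_, ?_, ?_, ?_⟩
    · intro j c'
      have := ynn j c'
      dsimp only
      split <;> linarith
    · intro j c' hc'
      have h1 : ¬(j = i ∧ c' = c) := by
        rintro ⟨rfl, rfl⟩; exact hc' hc
      simp [h1, ysupp j c' hc']
    · intro j
      rw [Finset.sum_add_distrib]
      by_cases hj : j = i
      · subst hj
        have h2 : ∑ c', (if j = j ∧ c' = c then δ else (0:ℝ)) = δ := by simp
        rw [h2]; linarith
      · have h2 : ∑ c', (if j = i ∧ c' = c then δ else (0:ℝ)) = 0 := by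
          simp [hj]
        rw [h2, add_zero]; exact yvcap j
    · intro c' hne
      rw [Finset.sum_add_distrib]
      have h2 : ∑ j, (if j = i ∧ c' = c then δ else (0:ℝ)) = 0 := by
        simp [fun (j : Fin n) => show ¬(j = i ∧ c' = c) from fun h => hne h.2]
      rw [h2, add_zero]; exact ycsum c'
    · rw [Finset.sum_add_distrib]
      have h2 : ∑ j, (if j = i ∧ c = c then δ else (0:ℝ)) = δ := by simp
      rw [h2, ycsum c]
    · intro j c'
      have := ylb j c'
      dsimp only
      split <;> linarith
  | toV i c h hp ih =>
    obtain ⟨ε, hε, K, hK, hmain⟩ := ih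
    refine ⟨min ε (x i c / (K + 2)), lt_min hε (by positivity), K + 1, by linarith,
      fun δ hδ hδε => ?_⟩
    have hδε1 : δ ≤ ε := le_trans hδε (min_le_left _ _)
    have hδε2 : δ ≤ x i c / (K + 2) := le_trans hδε (min_le_right _ _)
    have hK2 : (0:ℝ) < K + 2 := by linarith
    have hKδ : (K + 1) * δ ≤ x i c := by
      have := (le_div_iff₀ hK2).mp hδε2
      nlinarith
    obtain ⟨y, ynn, ysupp, yvcap, ycsum, ycsum', ylb⟩ := hmain δ hδ hδε1
    refine ⟨fun j c' => y j c' - if j = i ∧ c' = c then δ else 0, ?_, ?_, ?_, ?_, ?_, ?_⟩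
    · intro j c'
      have h1 := ynn j c'
      have h2 := ylb j c'
      dsimp only
      split
      · next h3 =>
        obtain ⟨rfl, rfl⟩ := h3
        nlinarith
      · linarith
    · intro j c' hc'
      have hcA : c ∈ A i := by
        by_contra hA
        exact hp.ne' (hsupp i c hA)
      have h1 : ¬(j = i ∧ c' = c) := by
        rintro ⟨rfl, rfl⟩
        exact hc' hcA
      simp [h1, ysupp j c' hc']
    · intro j
      rw [Finset.sum_sub_distrib]
      by_cases hj : j = i
      · subst hj
        have h2 : ∑ c', (if j = j ∧ c' = c then δ else (0:ℝ)) = δ := by simp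
        rw [h2]
        have := yvcap j; linarith
      · have h2 : ∑ c', (if j = i ∧ c' = c then δ else (0:ℝ)) = 0 := by simp [hj]
        rw [h2, sub_zero]
        have := yvcap j; linarith
    · rw [Finset.sum_sub_distrib]
      have h2 : ∑ c', (if i = i ∧ c' = c then δ else (0:ℝ)) = δ := by simp
      rw [h2]
      have := yvcap i; linarith
    · intro c'
      rw [Finset.sum_sub_distrib]
      by_cases hc' : c' = c
      · subst hc'
        have h2 : ∑ j, (if j = i ∧ c' = c' then δ else (0:ℝ)) = δ := by simp
        rw [h2, ycsum']; ring
      · have h2 : ∑ j, (if j = i ∧ c' = c then δ else (0:ℝ)) = 0 := by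
          simp [fun (j : Fin n) => show ¬(j = i ∧ c' = c) from fun h => hc' h.2]
        rw [h2, sub_zero]; exact ycsum c' hc'
    · intro j c'
      have h1 := ylb j c'
      dsimp only
      split <;> nlinarith

lemma reach_saturated {n k : ℕ} {A : Fin n → Finset C} {x : Fin n → C → ℝ}
    (hmax : IsMaxFlow n k A x) (c : C) (hc : Reach n k A x (.inr c)) :
    ∑ i, x i c = 1 := by
  obtain ⟨hfeas, hopt⟩ := hmax
  refine le_antisymm (hfeas.2.2.2 c) ?_
  by_contra hlt
  push_neg at hlt
  obtain ⟨ε, hε, K, hK, hmain⟩ := reach_aug hfeas _ hc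
  set δ := min ε (1 - ∑ i, x i c) with hδdef
  have hδ : 0 < δ := lt_min hε (by linarith)
  obtain ⟨y, ynn, ysupp, yvcap, ycsum, ycsum', ylb⟩ := hmain δ hδ (min_le_left _ _)
  have hyfeas : IsFeasibleFlow n k A y := by
    refine ⟨ynn, ysupp, yvcap, fun c' => ?_⟩
    by_cases hc' : c' = c
    · subst hc'
      rw [ycsum']
      have : δ ≤ 1 - ∑ i, x i c' := min_le_right _ _
      linarith
    · rw [ycsum c' hc']
      exact hfeas.2.2.2 c'
  have hval : flowValue y = flowValue x + δ := by
    unfold flowValue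
    rw [Finset.sum_comm, Finset.sum_comm (s := Finset.univ) (f := fun i c' => x i c')]
    rw [← Finset.sum_erase_add _ _ (Finset.mem_univ c),
      ← Finset.sum_erase_add _ _ (Finset.mem_univ c), ycsum']
    have : ∑ c' ∈ Finset.univ.erase c, ∑ j, y j c'
        = ∑ c' ∈ Finset.univ.erase c, ∑ j, x j c' :=
      Finset.sum_congr rfl fun c' hc' => ycsum c' (Finset.ne_of_mem_erase hc')
    rw [this]; ring
  have := hopt y hyfeas
  rw [hval] at this
  linarith

end Aux

/-- The fractional committee given by a maximum flow on the network representation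
(`p c = f(c,t) = ∑ i, x i c`) satisfies group resource proportionality. -/
theorem maxflow_committee_grp {C : Type*} [Fintype C] [DecidableEq C]
    (n k : ℕ) (hn : 0 < n) (hk : k ≤ Fintype.card C)
    (A : Fin n → Finset C) (x : Fin n → C → ℝ)
    (hx : IsMaxFlow n k A x) :
    GRP n k A (fun c => ∑ i, x i c) := by
  classical
  obtain ⟨⟨hnn, hsupp, hvcap, hccap⟩, hopt⟩ := hx
  intro S
  set T : Finset (Fin n) := S.filter (fun i => Reach n k A x (.inl i)) with hT
  have hTS : T ⊆ S := Finset.filter_subset _ _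
  have hUTS : T.sup A ⊆ S.sup A := Finset.sup_mono hTS
  -- every candidate in T.sup A is reachable, hence saturated
  have hsat : ∀ c ∈ T.sup A, ∑ i, x i c = 1 := by
    intro c hc
    rw [Finset.mem_sup] at hc
    obtain ⟨j, hj, hcj⟩ := hc
    rw [hT, Finset.mem_filter] at hj
    exact reach_saturated ⟨⟨hnn, hsupp, hvcap, hccap⟩, hopt⟩ c (Reach.toC j c hj.2 hcj)
  -- voters in S \ T are saturated and send all flow into (S.sup A) \ (T.sup A)
  have hvfull : ∀ i ∈ S \ T, ∑ c, x i c = (k : ℝ) / n := by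
    intro i hi
    rw [Finset.mem_sdiff, hT, Finset.mem_filter] at hi
    have hnr : ¬ Reach n k A x (.inl i) := fun h => hi.2 ⟨hi.1, h⟩
    refine le_antisymm (hvcap i) ?_
    by_contra hlt
    push_neg at hlt
    exact hnr (Reach.base i hlt)
  have hflow0 : ∀ i ∈ S \ T, ∀ c ∈ T.sup A, x i c = 0 := by
    intro i hi c hc
    rw [Finset.mem_sdiff, hT, Finset.mem_filter] at hi
    have hnr : ¬ Reach n k A x (.inl i) := fun h => hi.2 ⟨hi.1, h⟩
    by_contra hne
    have hpos : 0 < x i c := lt_of_le_of_ne (hnn i c) (Ne.symm hne)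
    rw [Finset.mem_sup] at hc
    obtain ⟨j, hj, hcj⟩ := hc
    rw [hT, Finset.mem_filter] at hj
    exact hnr (Reach.toV i c (Reach.toC j c hj.2 hcj) hpos)
  -- restricted sum for voters in S \ T
  have hrestrict : ∀ i ∈ S \ T, ∑ c ∈ S.sup A \ T.sup A, x i c = (k : ℝ) / n := by
    intro i hi
    rw [← hvfull i hi]
    refine Finset.sum_subset (Finset.subset_univ _) ?_
    intro c _ hc
    by_cases hcA : c ∈ A i
    · have hcS : c ∈ S.sup A := by
        rw [Finset.mem_sup]
        exact ⟨i, (Finset.mem_sdiff.mp hi).1, hcA⟩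
      have hcT : c ∈ T.sup A := by
        by_contra hcT
        exact hc (Finset.mem_sdiff.mpr ⟨hcS, hcT⟩)
      exact hflow0 i hi c hcT
    · exact hsupp i c hcA
  -- main estimate
  have hsplit : ∑ c ∈ S.sup A \ T.sup A, ∑ i, x i c + ∑ c ∈ T.sup A, ∑ i, x i c
      = ∑ c ∈ S.sup A, ∑ i, x i c := Finset.sum_sdiff hUTS
  have hpart1 : ∑ c ∈ T.sup A, ∑ i, x i c = ((T.sup A).card : ℝ) := by
    rw [Finset.sum_congr rfl hsat]
    simp
  have hpart2 : ((S \ T).card : ℝ) * k / n ≤ ∑ c ∈ S.sup A \ T.sup A, ∑ i, x i c := by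
    have h1 : ∑ c ∈ S.sup A \ T.sup A, ∑ i ∈ S \ T, x i c
        ≤ ∑ c ∈ S.sup A \ T.sup A, ∑ i, x i c := by
      refine Finset.sum_le_sum fun c _ => ?_
      exact Finset.sum_le_sum_of_subset_of_nonneg (Finset.subset_univ _)
        (fun i _ _ => hnn i c)
    have h2 : ∑ c ∈ S.sup A \ T.sup A, ∑ i ∈ S \ T, x i c
        = ∑ i ∈ S \ T, ∑ c ∈ S.sup A \ T.sup A, x i c := Finset.sum_comm
    have h3 : ∑ i ∈ S \ T, ∑ c ∈ S.sup A \ T.sup A, x i c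
        = ((S \ T).card : ℝ) * ((k : ℝ) / n) := by
      rw [Finset.sum_congr rfl hrestrict, Finset.sum_const, nsmul_eq_mul]
    have : ((S \ T).card : ℝ) * k / n = ((S \ T).card : ℝ) * ((k:ℝ) / n) := by ring
    rw [this, ← h3, ← h2]
    exact h1
  -- the penalty is at least the value at T
  have hpen : (T.card : ℝ) * k / n - ((T.sup A).card : ℝ) ≤ grpPenalty n k A S := by
    unfold grpPenalty
    exact Finset.le_sup' (fun T : Finset (Fin n) => (T.card : ℝ) * k / n - ((T.sup A).card : ℝ))
      (Finset.mem_powerset.mpr hTS)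
  have hcard : ((S \ T).card : ℝ) = (S.card : ℝ) - (T.card : ℝ) := by
    rw [Finset.card_sdiff_of_subset hTS]
    have := Finset.card_le_card hTS
    push_cast [Nat.cast_sub this]
    ring
  simp only []
  have hfinal : ((S \ T).card : ℝ) * k / n + ((T.sup A).card : ℝ)
      ≤ ∑ c ∈ S.sup A, ∑ i, x i c := by
    rw [← hsplit, ← hpart1]
    linarith
  rw [hcard] at hfinal
  have hn' : (0:ℝ) < n := by exact_mod_cast hn
  calc (S.card : ℝ) * k / n - grpPenalty n k A S
      ≤ (S.card : ℝ) * k / n - ((T.card : ℝ) * k / n - ((T.sup A).card : ℝ)) := by linarith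
    _ = ((S.card : ℝ) - (T.card : ℝ)) * k / n + ((T.sup A).card : ℝ) := by ring
    _ ≤ ∑ c ∈ S.sup A, ∑ i, x i c := hfinal
end

section
/- Conversely, if a fractional committee $\vec{p}$ satisfies group resource proportionality, then there exists a maximum flow $f$ on the network representation $\mathcal{N}$ with $p_c \geq f(c, t)$ for every candidate $c$. -/
open Finset

/-- Reachability in the residual graph of the (p-constrained) network. -/
inductive Reach_s14 {C : Type*} [Fintype C] (n k : ℕ) (A : Fin n → Finset C)
    (x : Fin n → C → ℝ) : Fin n → Prop
  | base (i : Fin n) : (∑ c, x i c) < (k : ℝ) / n → Reach_s14 n k A x i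
  | step (i i' : Fin n) (c : C) : Reach_s14 n k A x i' → c ∈ A i' → 0 < x i c →
      Reach_s14 n k A x i

/-- Augmentation lemma: a reachable voter can be given `δ` of free capacity without
decreasing the flow value or increasing any candidate's inflow. -/
lemma reach_aug_s14 {C : Type*} [Fintype C] [DecidableEq C] (n k : ℕ) (A : Fin n → Finset C)
    (x : Fin n → C → ℝ)
    (hx0 : ∀ j c, 0 ≤ x j c) (hxs : ∀ j c, c ∉ A j → x j c = 0)
    (hxr : ∀ j, ∑ c, x j c ≤ (k : ℝ) / n)
    {i : Fin n} (h : Reach_s14 n k A x i) :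
    ∃ M : ℕ, ∃ δ₀ : ℝ, 0 < δ₀ ∧ ∀ δ : ℝ, 0 < δ → δ ≤ δ₀ → ∃ y : Fin n → C → ℝ,
      (∀ j c, 0 ≤ y j c) ∧ (∀ j c, c ∉ A j → y j c = 0) ∧
      (∀ j, ∑ c, y j c ≤ (k : ℝ) / n) ∧ (∀ c, ∑ j, y j c ≤ ∑ j, x j c) ∧
      flowValue y = flowValue x ∧ (∑ c, y i c ≤ (k : ℝ) / n - δ) ∧
      (∀ j c, x j c - (M : ℝ) * δ ≤ y j c) := by
  induction h with
  | base i hi =>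
    refine ⟨0, (k : ℝ) / n - ∑ c, x i c, by linarith, fun δ hδ hδ' => ?_⟩
    exact ⟨x, hx0, hxs, hxr, fun c => le_refl _, rfl, by linarith,
      fun j c => by simp⟩
  | step i i' c' hr hc hpos ih =>
    obtain ⟨M', δ₀', hδ₀', H⟩ := ih
    have hM1 : (0 : ℝ) < (M' : ℝ) + 1 := by positivity
    refine ⟨M' + 1, min δ₀' (x i c' / ((M' : ℝ) + 1)),
      lt_min hδ₀' (by positivity), fun δ hδ hδ' => ?_⟩
    obtain ⟨y, hy0, hys, hyr, hycol, hyval, hyslack, hybd⟩ :=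
      H δ hδ (le_trans hδ' (min_le_left _ _))
    have hδx : ((M' : ℝ) + 1) * δ ≤ x i c' := by
      have := le_trans hδ' (min_le_right _ _)
      rw [le_div_iff₀ hM1] at this
      linarith [this]
    have hyic' : δ ≤ y i c' := by
      have := hybd i c'
      nlinarith
    set y' : Fin n → C → ℝ := fun j d =>
      y j d + (if j = i' ∧ d = c' then δ else 0) - (if j = i ∧ d = c' then δ else 0)
      with hy'def
    have hrow : ∀ j, ∑ d, y' j d =
        ∑ d, y j d + (if j = i' then δ else 0) - (if j = i then δ else 0) := by
      intro j
      simp only [hy'def]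
      rw [Finset.sum_sub_distrib, Finset.sum_add_distrib]
      congr 1
      · congr 1
        by_cases hj : j = i' <;> simp [hj]
      · by_cases hj : j = i <;> simp [hj]
    have hcol : ∀ d, ∑ j, y' j d = ∑ j, y j d := by
      intro d
      simp only [hy'def]
      rw [Finset.sum_sub_distrib, Finset.sum_add_distrib]
      by_cases hd : d = c' <;> simp [hd]
    have hAc' : c' ∈ A i := by
      by_contra hcon
      exact absurd (hxs i c' hcon) (by linarith)
    refine ⟨y', ?_, ?_, ?_, ?_, ?_, ?_, ?_⟩
    · intro j d
      have h0 := hy0 j d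
      have hge : j = i ∧ d = c' → δ ≤ y j d := by
        rintro ⟨rfl, rfl⟩; exact hyic'
      simp only [hy'def]
      split_ifs with hA hB hB
      · linarith
      · linarith
      · linarith [hge hB]
      · linarith
    · intro j d hd
      have h1 := hys j d hd
      have hji' : ¬(j = i' ∧ d = c') := by rintro ⟨rfl, rfl⟩; exact hd hc
      have hji : ¬(j = i ∧ d = c') := by rintro ⟨rfl, rfl⟩; exact hd hAc'
      simp only [hy'def, h1, hji, hji', if_false]
      ring
    · intro j
      have hs : j = i' → ∑ d, y j d ≤ (k : ℝ) / n - δ := by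
        rintro rfl; exact hyslack
      have hr' := hyr j
      rw [hrow j]
      split_ifs with hA hB hB
      · linarith
      · linarith [hs hA]
      · linarith
      · linarith
    · intro d; rw [hcol d]; exact hycol d
    · have hv : flowValue y' = flowValue y := by
        unfold flowValue
        rw [Finset.sum_congr rfl fun j _ => hrow j, Finset.sum_sub_distrib,
          Finset.sum_add_distrib]
        simp
      rw [hv, hyval]
    · have hs : i = i' → ∑ d, y i d ≤ (k : ℝ) / n - δ := by
        rintro rfl; exact hyslack
      have hr' := hyr i
      rw [hrow i]
      split_ifs with hA hB hB
      · linarith [hs hA]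
      · exact absurd rfl hB
      · linarith
      · exact absurd rfl hB
    · intro j d
      have h1 := hybd j d
      simp only [hy'def]
      push_cast
      split_ifs with hA hB hB <;> nlinarith [hδ.le]

/-- Conversely, if a fractional committee satisfies group resource proportionality, then
there is a maximum flow on the network representation whose candidate-to-sink flows are
elementwise dominated by `p`: `f(c,t) = ∑ i, x i c ≤ p c` for every candidate `c`. -/
theorem grp_implies_dominates_maxflow {C : Type*} [Fintype C] [DecidableEq C]
    (n k : ℕ) (hn : 0 < n) (hk : k ≤ Fintype.card C)
    (A : Fin n → Finset C) (p : C → ℝ)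
    (hp0 : ∀ c, 0 ≤ p c) (hp1 : ∀ c, p c ≤ 1) (hsum : ∑ c, p c = (k : ℝ))
    (hgrp : GRP n k A p) :
    ∃ x : Fin n → C → ℝ, IsMaxFlow n k A x ∧ ∀ c, ∑ i, x i c ≤ p c := by
  classical
  have hn' : (0 : ℝ) < n := by exact_mod_cast hn
  set D : Set (Fin n → C → ℝ) := {x | (∀ i c, 0 ≤ x i c) ∧ (∀ i c, c ∉ A i → x i c = 0) ∧
      (∀ i, ∑ c, x i c ≤ (k : ℝ) / n) ∧ (∀ c, ∑ i, x i c ≤ p c)} with hD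
  have h0D : (fun _ _ => (0 : ℝ)) ∈ D := by
    refine ⟨fun i c => le_refl _, fun i c _ => rfl, fun i => by simp; positivity,
      fun c => by simpa using hp0 c⟩
  -- compactness of D
  have hDsub : D ⊆ Set.univ.pi (fun _ : Fin n => Set.univ.pi fun _ : C => Set.Icc (0:ℝ) 1) := by
    rintro x ⟨h0, hs, hr, hc⟩ i _
    intro c _
    refine ⟨h0 i c, ?_⟩
    calc x i c ≤ ∑ j, x j c :=
          Finset.single_le_sum (f := fun j => x j c) (fun j _ => h0 j c) (Finset.mem_univ i)
      _ ≤ p c := hc c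
      _ ≤ 1 := hp1 c
  have hev : ∀ (i : Fin n) (c : C), Continuous fun x : Fin n → C → ℝ => x i c :=
    fun i c => (continuous_apply c).comp (continuous_apply i)
  have hDclosed : IsClosed D := by
    have e1 : IsClosed {x : Fin n → C → ℝ | ∀ i c, 0 ≤ x i c} := by
      have h : {x : Fin n → C → ℝ | ∀ i c, 0 ≤ x i c} = ⋂ i, ⋂ c, {x | 0 ≤ x i c} := by
        ext x; simp
      rw [h]
      exact isClosed_iInter fun i => isClosed_iInter fun c =>
        isClosed_le continuous_const (hev i c)
    have e2 : IsClosed {x : Fin n → C → ℝ | ∀ i c, c ∉ A i → x i c = 0} := by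
      have h : {x : Fin n → C → ℝ | ∀ i c, c ∉ A i → x i c = 0}
          = ⋂ i, ⋂ c, {x | c ∉ A i → x i c = 0} := by ext x; simp
      rw [h]
      refine isClosed_iInter fun i => isClosed_iInter fun c => ?_
      by_cases hc : c ∈ A i
      · have : {x : Fin n → C → ℝ | c ∉ A i → x i c = 0} = Set.univ := by
          ext x; simp [hc]
        rw [this]; exact isClosed_univ
      · have : {x : Fin n → C → ℝ | c ∉ A i → x i c = 0} = {x | x i c = 0} := by
          ext x; simp [hc]
        rw [this]; exact isClosed_eq (hev i c) continuous_const
    have e3 : IsClosed {x : Fin n → C → ℝ | ∀ i, ∑ c, x i c ≤ (k : ℝ) / n} := by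
      have h : {x : Fin n → C → ℝ | ∀ i, ∑ c, x i c ≤ (k : ℝ) / n}
          = ⋂ i, {x | ∑ c, x i c ≤ (k : ℝ) / n} := by ext x; simp
      rw [h]
      exact isClosed_iInter fun i =>
        isClosed_le (continuous_finset_sum _ fun c _ => hev i c) continuous_const
    have e4 : IsClosed {x : Fin n → C → ℝ | ∀ c, ∑ i, x i c ≤ p c} := by
      have h : {x : Fin n → C → ℝ | ∀ c, ∑ i, x i c ≤ p c}
          = ⋂ c, {x | ∑ i, x i c ≤ p c} := by ext x; simp
      rw [h]
      exact isClosed_iInter fun c =>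
        isClosed_le (continuous_finset_sum _ fun i _ => hev i c) continuous_const
    have hDeq : D = {x : Fin n → C → ℝ | ∀ i c, 0 ≤ x i c}
        ∩ ({x | ∀ i c, c ∉ A i → x i c = 0}
        ∩ ({x | ∀ i, ∑ c, x i c ≤ (k : ℝ) / n} ∩ {x | ∀ c, ∑ i, x i c ≤ p c})) := by
      ext x; constructor
      · rintro ⟨a, b, c, d⟩; exact ⟨a, b, c, d⟩
      · rintro ⟨a, b, c, d⟩; exact ⟨a, b, c, d⟩
    rw [hDeq]
    exact e1.inter (e2.inter (e3.inter e4))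
  have hDcompact : IsCompact D :=
    (isCompact_univ_pi fun _ => isCompact_univ_pi fun _ => isCompact_Icc).of_isClosed_subset
      hDclosed hDsub
  have hcont : Continuous (flowValue : (Fin n → C → ℝ) → ℝ) := by
    unfold flowValue
    exact continuous_finset_sum _ fun i _ => continuous_finset_sum _ fun c _ => hev i c
  obtain ⟨x, hxD, hxmax⟩ := hDcompact.exists_isMaxOn ⟨_, h0D⟩ hcont.continuousOn
  obtain ⟨hx0, hxs, hxr, hxp⟩ := hxD
  have hxD' : x ∈ D := ⟨hx0, hxs, hxr, hxp⟩
  -- saturation of reachable candidates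
  have hsat : ∀ c : C, (∃ i, Reach_s14 n k A x i ∧ c ∈ A i) → ∑ j, x j c = p c := by
    rintro c ⟨i₀, hri, hci⟩
    refine le_antisymm (hxp c) ?_
    by_contra hlt
    push_neg at hlt
    obtain ⟨M, δ₀, hδ₀, H⟩ := reach_aug_s14 n k A x hx0 hxs hxr hri
    set δ := min δ₀ (p c - ∑ j, x j c) with hδdef
    have hδpos : 0 < δ := lt_min hδ₀ (by linarith)
    obtain ⟨y, hy0, hys, hyr, hycol, hyval, hyslack, hybd⟩ := H δ hδpos (min_le_left _ _)
    set y' : Fin n → C → ℝ := fun j d => y j d + if j = i₀ ∧ d = c then δ else 0 with hy'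
    have hy'D : y' ∈ D := by
      refine ⟨?_, ?_, ?_, ?_⟩
      · intro j d; have := hy0 j d; simp only [hy']; split_ifs <;> linarith
      · intro j d hd
        have h1 := hys j d hd
        have h2 : ¬(j = i₀ ∧ d = c) := by rintro ⟨rfl, rfl⟩; exact hd hci
        simp [hy', h1, h2]
      · intro j
        have hrowsum : ∑ d, y' j d = ∑ d, y j d + if j = i₀ then δ else 0 := by
          simp only [hy']
          rw [Finset.sum_add_distrib]
          congr 1
          by_cases hj : j = i₀ <;> simp [hj]
        rw [hrowsum]
        have hs : j = i₀ → ∑ d, y j d ≤ (k : ℝ) / n - δ := by rintro rfl; exact hyslack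
        split_ifs with hj
        · linarith [hs hj]
        · linarith [hyr j]
      · intro d
        have hcolsum : ∑ j, y' j d = ∑ j, y j d + if d = c then δ else 0 := by
          simp only [hy']
          rw [Finset.sum_add_distrib]
          congr 1
          by_cases hd : d = c <;> simp [hd]
        rw [hcolsum]
        have hs : d = c → ∑ j, y j d + δ ≤ p d := by
          rintro rfl
          have h4 : δ ≤ p d - ∑ j, x j d := min_le_right _ _
          linarith [hycol d]
        split_ifs with hd
        · exact hs hd
        · linarith [hycol d, hxp d]
    have hind : ∑ j : Fin n, ∑ d : C, (if j = i₀ ∧ d = c then δ else 0) = δ := by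
      have h : ∀ j : Fin n, ∑ d : C, (if j = i₀ ∧ d = c then δ else 0)
          = if j = i₀ then δ else 0 := by
        intro j; by_cases hj : j = i₀ <;> simp [hj]
      rw [Finset.sum_congr rfl fun j _ => h j]
      simp
    have hval : flowValue y' = flowValue x + δ := by
      have hy'val : flowValue y' = flowValue y + δ := by
        unfold flowValue
        simp only [hy']
        rw [Finset.sum_congr rfl fun j _ => Finset.sum_add_distrib,
          Finset.sum_add_distrib, hind]
      rw [hy'val, hyval]
    have hle := isMaxOn_iff.mp hxmax y' hy'D
    rw [hval] at hle
    linarith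
  have hzero : ∀ c j, (∃ i, Reach_s14 n k A x i ∧ c ∈ A i) → ¬Reach_s14 n k A x j → x j c = 0 := by
    rintro c j ⟨i₀, hri, hci⟩ hnr
    by_contra h
    exact hnr (Reach_s14.step j i₀ c hri hci (lt_of_le_of_ne (hx0 j c) (Ne.symm h)))
  have hfull : ∀ i, ¬Reach_s14 n k A x i → ∑ c, x i c = (k : ℝ) / n := by
    intro i hnr
    refine le_antisymm (hxr i) ?_
    by_contra h
    push_neg at h
    exact hnr (Reach_s14.base i h)
  -- the cut induced by reachable voters
  set Sv : Finset (Fin n) := univ.filter (fun i => Reach_s14 n k A x i) with hSv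
  set Sc : Finset (Fin n) := univ.filter (fun i => ¬ Reach_s14 n k A x i) with hSc
  have hsplit : flowValue x = ∑ i ∈ Sv, ∑ c, x i c + ∑ i ∈ Sc, ∑ c, x i c :=
    (Finset.sum_filter_add_sum_filter_not univ _ _).symm
  have h2 : ∑ i ∈ Sc, ∑ c, x i c = (Sc.card : ℝ) * ((k : ℝ) / n) := by
    rw [Finset.sum_congr rfl fun i hi => hfull i (by simpa [hSc] using (Finset.mem_filter.mp hi).2),
      Finset.sum_const, nsmul_eq_mul]
  have h3 : ∑ i ∈ Sv, ∑ c, x i c = ∑ c ∈ Sv.sup A, p c := by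
    have hrow : ∀ i ∈ Sv, ∑ c, x i c = ∑ c ∈ Sv.sup A, x i c := by
      intro i hi
      refine (Finset.sum_subset (Finset.subset_univ _) ?_).symm
      intro c _ hc
      exact hxs i c fun hci => hc (Finset.mem_sup.mpr ⟨i, hi, hci⟩)
    rw [Finset.sum_congr rfl hrow, Finset.sum_comm]
    refine Finset.sum_congr rfl fun c hc => ?_
    obtain ⟨i₀, hi₀, hci₀⟩ := Finset.mem_sup.mp hc
    have hreach : ∃ i, Reach_s14 n k A x i ∧ c ∈ A i :=
      ⟨i₀, by simpa [hSv] using (Finset.mem_filter.mp hi₀).2, hci₀⟩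
    have htot := hsat c hreach
    have hz : ∑ i ∈ Sc, x i c = 0 :=
      Finset.sum_eq_zero fun j hj =>
        hzero c j hreach (by simpa [hSc] using (Finset.mem_filter.mp hj).2)
    have hpart := Finset.sum_filter_add_sum_filter_not univ
      (fun i => Reach_s14 n k A x i) (fun i => x i c)
    rw [← hSv, ← hSc] at hpart
    linarith
  have hcards : (Sv.card : ℝ) + (Sc.card : ℝ) = n := by
    have h := Finset.card_filter_add_card_filter_not
      (s := univ) (p := fun i => Reach_s14 n k A x i)
    rw [Finset.card_univ, Fintype.card_fin] at h
    rw [hSv, hSc]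
    exact_mod_cast h
  -- GRP lower bound on the constrained max flow value
  have hGRPSv := hgrp Sv
  have hpen_mono : grpPenalty n k A Sv ≤ grpPenalty n k A univ := by
    unfold grpPenalty
    refine Finset.sup'_le _ _ fun T hT => ?_
    exact Finset.le_sup'
      (fun T : Finset (Fin n) => (T.card : ℝ) * k / n - ((T.sup A).card : ℝ))
      (Finset.mem_powerset.mpr (Finset.subset_univ T))
  -- weak duality: every feasible flow is at most k - penalty(univ)
  have hub : ∀ y : Fin n → C → ℝ, IsFeasibleFlow n k A y →
      flowValue y ≤ (k : ℝ) - grpPenalty n k A univ := by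
    intro y hy
    obtain ⟨hy0, hys, hyr, hyc⟩ := hy
    obtain ⟨T, hT, hTeq⟩ := Finset.exists_mem_eq_sup'
      (⟨∅, Finset.empty_mem_powerset _⟩ : ((univ : Finset (Fin n)).powerset).Nonempty)
      (fun T : Finset (Fin n) => (T.card : ℝ) * k / n - ((T.sup A).card : ℝ))
    have hpen : grpPenalty n k A univ = (T.card : ℝ) * k / n - ((T.sup A).card : ℝ) := by
      rw [grpPenalty]; exact hTeq
    have hsd := Finset.sum_sdiff (f := fun i => ∑ c, y i c) (Finset.subset_univ T)
    have hb1 : ∑ i ∈ univ \ T, ∑ c, y i c ≤ ((univ \ T).card : ℝ) * ((k : ℝ) / n) := by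
      calc ∑ i ∈ univ \ T, ∑ c, y i c ≤ ∑ _i ∈ univ \ T, (k : ℝ) / n :=
            Finset.sum_le_sum fun i _ => hyr i
        _ = _ := by rw [Finset.sum_const, nsmul_eq_mul]
    have hb2 : ∑ i ∈ T, ∑ c, y i c ≤ ((T.sup A).card : ℝ) := by
      have hrow : ∀ i ∈ T, ∑ c, y i c = ∑ c ∈ T.sup A, y i c := by
        intro i hi
        refine (Finset.sum_subset (Finset.subset_univ _) ?_).symm
        intro c _ hc
        exact hys i c fun hci => hc (Finset.mem_sup.mpr ⟨i, hi, hci⟩)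
      rw [Finset.sum_congr rfl hrow, Finset.sum_comm]
      calc ∑ c ∈ T.sup A, ∑ i ∈ T, y i c ≤ ∑ _c ∈ T.sup A, (1 : ℝ) := by
            refine Finset.sum_le_sum fun c _ => ?_
            calc ∑ i ∈ T, y i c ≤ ∑ i, y i c :=
                  Finset.sum_le_sum_of_subset_of_nonneg (Finset.subset_univ T)
                    fun i _ _ => hy0 i c
              _ ≤ 1 := hyc c
        _ = ((T.sup A).card : ℝ) := by rw [Finset.sum_const, nsmul_eq_mul, mul_one]
    have hTle : T.card ≤ n := by
      have h := Finset.card_le_card (Finset.subset_univ T)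
      rwa [Finset.card_univ, Fintype.card_fin] at h
    have hcard : ((univ \ T).card : ℝ) = (n : ℝ) - T.card := by
      rw [Finset.card_sdiff_of_subset (Finset.subset_univ T), Finset.card_univ, Fintype.card_fin,
        Nat.cast_sub hTle]
    have hkey : ((n : ℝ) - T.card) * ((k : ℝ) / n) = (k : ℝ) - (T.card : ℝ) * k / n := by
      field_simp
    have hfv : flowValue y = ∑ i ∈ univ \ T, ∑ c, y i c + ∑ i ∈ T, ∑ c, y i c := by
      rw [hsd]; rfl
    rw [hfv, hpen]
    rw [hcard, hkey] at hb1
    linarith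
  -- conclude
  refine ⟨x, ⟨⟨hx0, hxs, hxr, fun c => le_trans (hxp c) (hp1 c)⟩, ?_⟩, hxp⟩
  intro y hy
  have h1 := hub y hy
  have hkn : (n : ℝ) * ((k : ℝ) / n) = (k : ℝ) := by field_simp
  have hexp : (Sv.card : ℝ) * ((k : ℝ) / n) + (Sc.card : ℝ) * ((k : ℝ) / n)
      = ((Sv.card : ℝ) + (Sc.card : ℝ)) * ((k : ℝ) / n) := by ring
  have hmd : (Sv.card : ℝ) * k / n = (Sv.card : ℝ) * ((k : ℝ) / n) := by ring
  rw [hcards, hkn] at hexp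
  rw [hmd] at hGRPSv
  rw [hsplit, h2, h3]
  linarith
end

section
/- In a network where only arcs entering the sink have nonzero costs and all these costs are pairwise distinct (a sink-distinct cost function on an entitlement network), any two minimum-cost flows $f$ and $f'$ of equal value $\alpha$ have identical flows into the sink: $f(c,t) = f'(c,t)$ for every candidate $c$. -/
open Finset

/-- A feasible flow on an entitlement network: voter `i` is entitled to capacity `e i`
from the source, flow from voters may only enter approved candidates, and each candidate
has capacity `1` into the sink. -/
def EntFeasible {C : Type*} [Fintype C] {n : ℕ} (A : Fin n → Finset C)
    (e : Fin n → ℝ) (x : Fin n → C → ℝ) : Prop :=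
  (∀ i c, 0 ≤ x i c) ∧ (∀ i c, c ∉ A i → x i c = 0) ∧
    (∀ i, ∑ c, x i c ≤ e i) ∧ (∀ c, ∑ i, x i c ≤ 1)

open scoped Classical

namespace MFSU

variable {C : Type*} [Fintype C] [DecidableEq C] {n : ℕ}

/-- Alternating walks in the residual structure of the difference circulation. -/
def IsWalk (x : Fin n → Option C → ℝ) (d : Option C → ℝ)
    (m : ℕ) (w : ℕ → Option C) (v : ℕ → Fin n) : Prop :=
  d (w 0) < 0 ∧ ∀ j < m, x (v j) (w j) < 0 ∧ 0 < x (v j) (w (j+1))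

/-- `c` is reachable in exactly `m` alternating steps from a deficient candidate. -/
def ReachN (x : Fin n → Option C → ℝ) (d : Option C → ℝ) : ℕ → Option C → Prop
  | 0, c => d c < 0
  | (m+1), c => ∃ c₀ i, ReachN x d m c₀ ∧ x i c₀ < 0 ∧ 0 < x i c

lemma walk_of_reach (x : Fin n → Option C → ℝ) (d : Option C → ℝ) (i₀ : Fin n) :
    ∀ m c, ReachN x d m c → ∃ w v, IsWalk x d m w v ∧ w m = c := by
  intro m
  induction m with
  | zero =>
    intro c hc
    exact ⟨fun _ => c, fun _ => i₀, ⟨hc, by omega⟩, rfl⟩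
  | succ m ih =>
    intro c hc
    obtain ⟨c₀, i, hr, hneg, hpos⟩ := hc
    obtain ⟨w, v, ⟨hw0, hstep⟩, hwm⟩ := ih c₀ hr
    refine ⟨fun j => if j ≤ m then w j else c, fun j => if j < m then v j else i, ⟨?_, ?_⟩, ?_⟩
    · simpa using hw0
    · intro j hj
      rcases lt_or_ge j m with h | h
      · have hh := hstep j h
        simp only [if_pos h, if_pos h.le, if_pos (by omega : j + 1 ≤ m)]
        exact hh
      · have hjm : j = m := by omega
        rw [hjm]
        simp only [if_neg (lt_irrefl m), if_pos (le_refl m), if_neg (by omega : ¬ m + 1 ≤ m)]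
        rw [hwm]
        exact ⟨hneg, hpos⟩
    · simp

lemma reach_of_walk_prefix (x : Fin n → Option C → ℝ) (d : Option C → ℝ)
    {m : ℕ} {w : ℕ → Option C} {v : ℕ → Fin n} (hw : IsWalk x d m w v) :
    ∀ j ≤ m, ReachN x d j (w j) := by
  intro j
  induction j with
  | zero => intro _; exact hw.1
  | succ j ih =>
    intro hj
    exact ⟨w j, v j, ih (by omega), (hw.2 j (by omega)).1, (hw.2 j (by omega)).2⟩

lemma reach_splice (x : Fin n → Option C → ℝ) (d : Option C → ℝ)
    {m : ℕ} {w : ℕ → Option C} {v : ℕ → Fin n} (hw : IsWalk x d m w v)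
    {a l : ℕ} (hl : l ≤ m) (ha : ReachN x d a (w l)) :
    ∀ k, l + k ≤ m → ReachN x d (a + k) (w (l + k)) := by
  intro k
  induction k with
  | zero => intro _; exact ha
  | succ k ih =>
    intro hk
    have hstep := hw.2 (l + k) (by omega)
    exact ⟨w (l + k), v (l + k), ih (by omega), hstep.1, by
      have : l + (k + 1) = (l + k) + 1 := by omega
      rw [this]; exact hstep.2⟩

lemma exists_pos_reach (x : Fin n → Option C → ℝ) (d : Option C → ℝ)
    (hd : d = fun c => ∑ i, x i c)
    (hrow : ∀ i, ∑ c, x i c = 0) {cm : Option C} (hcm : d cm < 0) :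
    ∃ m c, ReachN x d m c ∧ 0 < d c := by
  by_contra hcon
  push_neg at hcon
  set R : Finset (Option C) := univ.filter (fun c => ∃ m, ReachN x d m c) with hR
  have hmem : ∀ c, c ∈ R ↔ ∃ m, ReachN x d m c := by
    intro c; simp [hR]
  have key : ∀ i, 0 ≤ ∑ c ∈ R, x i c := by
    intro i
    by_cases hneg : ∃ c ∈ R, x i c < 0
    · obtain ⟨c₁, hc₁R, hc₁⟩ := hneg
      obtain ⟨m₁, hm₁⟩ := (hmem c₁).1 hc₁R
      have hcompl : ∀ c ∈ univ \ R, x i c ≤ 0 := by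
        intro c hc
        simp only [mem_sdiff, mem_univ, true_and] at hc
        by_contra hpos
        push_neg at hpos
        exact hc ((hmem c).2 ⟨m₁ + 1, ⟨c₁, i, hm₁, hc₁, hpos⟩⟩)
      have hsplit : ∑ c ∈ R, x i c + ∑ c ∈ univ \ R, x i c = 0 := by
        rw [add_comm, Finset.sum_sdiff (R.subset_univ)]
        exact hrow i
      have := Finset.sum_nonpos hcompl
      linarith
    · push_neg at hneg
      exact Finset.sum_nonneg fun c hc => hneg c hc
  have h1 : 0 ≤ ∑ c ∈ R, d c := by
    rw [hd]
    rw [Finset.sum_comm]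
    exact Finset.sum_nonneg fun i _ => key i
  have hcmR : cm ∈ R := (hmem cm).2 ⟨0, hcm⟩
  have h2 : ∑ c ∈ R, d c < 0 := by
    have := Finset.add_sum_erase R d hcmR
    have h3 : ∑ c ∈ R.erase cm, d c ≤ 0 :=
      Finset.sum_nonpos fun c hc => by
        obtain ⟨m, hm⟩ := (hmem c).1 (Finset.mem_of_mem_erase hc)
        exact le_of_not_gt fun h => absurd (hcon m c hm) (by simpa using h)
    linarith
  linarith

/-- Helper: a sum of indicators over a walk with distinct candidates is `0` or `1`. -/
lemma indicator_sum (m : ℕ) (w : ℕ → Option C) (v : ℕ → Fin n)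
    (hdist : ∀ j j', j < j' → j' ≤ m → w j ≠ w j') (i : Fin n) (c : Option C) :
    (∑ j ∈ range m, (if v j = i then (if w j = c then (1:ℝ) else 0) else 0)) = 0 ∨
    (∃ j < m, v j = i ∧ w j = c ∧
      (∑ j ∈ range m, (if v j = i then (if w j = c then (1:ℝ) else 0) else 0)) = 1) := by
  by_cases hex : ∃ j ∈ range m, v j = i ∧ w j = c
  · obtain ⟨j₀, hj₀m, hvi, hwc⟩ := hex
    have hj₀ : j₀ < m := Finset.mem_range.1 hj₀m
    right
    refine ⟨j₀, hj₀, hvi, hwc, ?_⟩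
    rw [Finset.sum_eq_single j₀]
    · rw [if_pos hvi, if_pos hwc]
    · intro j hj hne
      have hjlt : j < m := Finset.mem_range.1 hj
      rcases eq_or_ne (w j) c with h | h
      · exfalso
        have hwj : w j = w j₀ := by rw [h, hwc]
        rcases lt_trichotomy j j₀ with hlt | heq | hgt
        · exact hdist j j₀ hlt (by omega) hwj
        · exact hne heq
        · exact hdist j₀ j hgt (by omega) hwj.symm
      · simp [h]
    · intro h; exact absurd hj₀m h
  · left
    push_neg at hex
    refine Finset.sum_eq_zero fun j hj => ?_
    by_cases h1 : v j = i
    · by_cases h2 : w j = c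
      · exact absurd h2 (hex j hj h1)
      · simp [h1, h2]
    · simp [h1]

/-- Helper: same for the shifted indicators. -/
lemma indicator_sum' (m : ℕ) (w : ℕ → Option C) (v : ℕ → Fin n)
    (hdist : ∀ j j', j < j' → j' ≤ m → w j ≠ w j') (i : Fin n) (c : Option C) :
    (∑ j ∈ range m, (if v j = i then (if w (j+1) = c then (1:ℝ) else 0) else 0)) = 0 ∨
    (∃ j < m, v j = i ∧ w (j+1) = c ∧
      (∑ j ∈ range m, (if v j = i then (if w (j+1) = c then (1:ℝ) else 0) else 0)) = 1) := by
  by_cases hex : ∃ j ∈ range m, v j = i ∧ w (j+1) = c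
  · obtain ⟨j₀, hj₀m, hvi, hwc⟩ := hex
    have hj₀ : j₀ < m := Finset.mem_range.1 hj₀m
    right
    refine ⟨j₀, hj₀, hvi, hwc, ?_⟩
    rw [Finset.sum_eq_single j₀]
    · rw [if_pos hvi, if_pos hwc]
    · intro j hj hne
      have hjlt : j < m := Finset.mem_range.1 hj
      rcases eq_or_ne (w (j+1)) c with h | h
      · exfalso
        have hwj : w (j+1) = w (j₀+1) := by rw [h, hwc]
        rcases lt_trichotomy j j₀ with hlt | heq | hgt
        · exact hdist (j+1) (j₀+1) (by omega) (by omega) hwj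
        · exact hne heq
        · exact hdist (j₀+1) (j+1) (by omega) (by omega) hwj.symm
      · simp [h]
    · intro h; exact absurd hj₀m h
  · left
    push_neg at hex
    refine Finset.sum_eq_zero fun j hj => ?_
    by_cases h1 : v j = i
    · by_cases h2 : w (j+1) = c
      · exact absurd h2 (hex j hj h1)
      · simp [h1, h2]
    · simp [h1]

/-- Core lemma: from a nonzero difference circulation extract an augmenting
perturbation along a simple alternating path between two sink arcs. -/
lemma exists_perturbation (x : Fin n → Option C → ℝ)
    (hrow : ∀ i, ∑ c, x i c = 0)
    (hnone : ∑ i, x i none = 0)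
    {c0 : Option C} (hc0 : ∑ i, x i c0 ≠ 0) :
    ∃ (ca cb : C) (ε : ℝ) (δ : Fin n → Option C → ℝ),
      0 < ε ∧ ca ≠ cb ∧
      ε ≤ -(∑ i, x i (some ca)) ∧ ε ≤ ∑ i, x i (some cb) ∧
      (∀ i, ∑ c, δ i c = 0) ∧
      (∀ c, ∑ i, δ i c = (if c = some ca then 1 else 0) - (if c = some cb then 1 else 0)) ∧
      (∀ i c, 0 < δ i c → δ i c = 1 ∧ x i c ≤ -ε) ∧
      (∀ i c, δ i c < 0 → δ i c = -1 ∧ ε ≤ x i c) := by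
  classical
  set d : Option C → ℝ := fun c => ∑ i, x i c with hd
  have htot : ∑ c, d c = 0 := by
    rw [hd, Finset.sum_comm]
    exact Finset.sum_eq_zero fun i _ => hrow i
  have hexneg : ∃ c, d c < 0 := by
    by_contra hno
    push_neg at hno
    have h1 : d c0 ≤ ∑ c, d c :=
      Finset.single_le_sum (fun c _ => hno c) (Finset.mem_univ c0)
    rw [htot] at h1
    exact hc0 (le_antisymm h1 (hno c0))
  obtain ⟨cneg, hcneg⟩ := hexneg
  have hnpos : Nonempty (Fin n) := by
    rcases Nat.eq_zero_or_pos n with h | h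
    · exfalso; apply hc0; subst h; simp
    · exact ⟨⟨0, h⟩⟩
  obtain ⟨i₀⟩ := hnpos
  have hreach : ∃ m, ∃ c, ReachN x d m c ∧ 0 < d c :=
    let ⟨m, c, h1, h2⟩ := exists_pos_reach x d rfl hrow hcneg
    ⟨m, c, h1, h2⟩
  set m := Nat.find hreach with hm
  obtain ⟨cb', hcb'r, hcb'pos⟩ := Nat.find_spec hreach
  obtain ⟨w, v, hwalk, hwm⟩ := walk_of_reach x d i₀ m cb' hcb'r
  have hw0neg : d (w 0) < 0 := hwalk.1
  have hwmpos : 0 < d (w m) := by rw [hwm]; exact hcb'pos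
  have hm1 : 1 ≤ m := by
    rcases Nat.eq_zero_or_pos m with h | h
    · exfalso; rw [h] at hwmpos; linarith
    · exact h
  have hdist : ∀ j j', j < j' → j' ≤ m → w j ≠ w j' := by
    intro j j' hjj' hj'm heq
    have h1 : ReachN x d j (w j) := reach_of_walk_prefix x d hwalk j (by omega)
    have h2 : ReachN x d (j + (m - j')) (w (j' + (m - j'))) := by
      apply reach_splice x d hwalk hj'm (by rw [← heq]; exact h1) _ (by omega)
    have h3 : j' + (m - j') = m := by omega
    rw [h3] at h2
    have : m ≤ j + (m - j') := Nat.find_min' hreach ⟨w m, h2, hwmpos⟩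
    omega
  obtain ⟨ca, hca⟩ : ∃ ca : C, w 0 = some ca := by
    rcases Option.eq_none_or_eq_some (w 0) with h | h
    · exfalso
      rw [h] at hw0neg
      have : d none = 0 := hnone
      linarith
    · exact h
  obtain ⟨cb, hcb⟩ : ∃ cb : C, w m = some cb := by
    rcases Option.eq_none_or_eq_some (w m) with h | h
    · exfalso
      rw [h] at hwmpos
      have : d none = 0 := hnone
      linarith
    · exact h
  have hcacb : ca ≠ cb := by
    intro h
    exact hdist 0 m (by omega) (le_refl m) (by rw [hca, hcb, h])
  have hne : (range m).Nonempty := ⟨0, Finset.mem_range.2 (by omega)⟩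
  set εa : ℝ := (range m).inf' hne fun j => min (-(x (v j) (w j))) (x (v j) (w (j+1)))
    with hεa
  set ε : ℝ := min εa (min (-(d (w 0))) (d (w m))) with hε
  have hεpos : 0 < ε := by
    rw [hε]
    apply lt_min
    · rw [hεa]
      refine (Finset.lt_inf'_iff hne (a := (0:ℝ))).2 fun j hj => ?_
      have hj' := hwalk.2 j (Finset.mem_range.1 hj)
      exact lt_min (by linarith [hj'.1]) hj'.2
    · exact lt_min (by linarith) hwmpos
  have hεa_le : ∀ j < m, ε ≤ -(x (v j) (w j)) ∧ ε ≤ x (v j) (w (j+1)) := by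
    intro j hj
    have h1 : ε ≤ εa := min_le_left _ _
    have h2 : εa ≤ min (-(x (v j) (w j))) (x (v j) (w (j+1))) :=
      Finset.inf'_le _ (Finset.mem_range.2 hj)
    exact ⟨le_trans (le_trans h1 h2) (min_le_left _ _),
      le_trans (le_trans h1 h2) (min_le_right _ _)⟩
  set δ : Fin n → Option C → ℝ := fun i c =>
    (∑ j ∈ range m, (if v j = i then (if w j = c then (1:ℝ) else 0) else 0))
      - (∑ j ∈ range m, (if v j = i then (if w (j+1) = c then (1:ℝ) else 0) else 0))
    with hδ
  refine ⟨ca, cb, ε, δ, hεpos, hcacb, ?_, ?_, ?_, ?_, ?_, ?_⟩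
  · have h1 : ε ≤ -(d (w 0)) := le_trans (min_le_right _ _) (min_le_left _ _)
    rw [hca] at h1
    exact h1
  · have h1 : ε ≤ d (w m) := le_trans (min_le_right _ _) (min_le_right _ _)
    rw [hcb] at h1
    exact h1
  · -- row sums of δ vanish
    intro i
    rw [hδ]
    simp only
    rw [Finset.sum_sub_distrib, Finset.sum_comm (γ := Option C), Finset.sum_comm (γ := Option C)]
    rw [sub_eq_zero]
    refine Finset.sum_congr rfl fun j _ => ?_
    by_cases h : v j = i
    · simp [h, Finset.sum_ite_eq]
    · simp [h]
  · -- column sums of δ telescope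
    intro c
    rw [hδ]
    simp only
    rw [Finset.sum_sub_distrib, Finset.sum_comm (γ := Fin n), Finset.sum_comm (γ := Fin n)]
    have e2 : (∑ j ∈ range m, ∑ i : Fin n,
        (if v j = i then (if w j = c then (1:ℝ) else 0) else 0))
        = ∑ j ∈ range m, (if w j = c then (1:ℝ) else 0) := by
      refine Finset.sum_congr rfl fun j _ => ?_
      rw [Finset.sum_ite_eq univ (v j) (fun _ => if w j = c then (1:ℝ) else 0)]
      simp
    have e3 : (∑ j ∈ range m, ∑ i : Fin n,
        (if v j = i then (if w (j+1) = c then (1:ℝ) else 0) else 0))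
        = ∑ j ∈ range m, (if w (j+1) = c then (1:ℝ) else 0) := by
      refine Finset.sum_congr rfl fun j _ => ?_
      rw [Finset.sum_ite_eq univ (v j) (fun _ => if w (j+1) = c then (1:ℝ) else 0)]
      simp
    rw [e2, e3]
    have e4 : (∑ j ∈ range m, (if w j = c then (1:ℝ) else 0))
        - (∑ j ∈ range m, (if w (j+1) = c then (1:ℝ) else 0))
        = (if w 0 = c then (1:ℝ) else 0) - (if w m = c then 1 else 0) := by
      have h5 : (∑ j ∈ range m, (if w (j+1) = c then (1:ℝ) else 0))
          + (if w 0 = c then (1:ℝ) else 0) = ∑ j ∈ range (m+1), (if w j = c then (1:ℝ) else 0) := by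
        rw [Finset.sum_range_succ' (fun j => if w j = c then (1:ℝ) else 0) m]
      have h6 : (∑ j ∈ range m, (if w j = c then (1:ℝ) else 0))
          + (if w m = c then (1:ℝ) else 0) = ∑ j ∈ range (m+1), (if w j = c then (1:ℝ) else 0) := by
        rw [Finset.sum_range_succ]
      linarith
    rw [e4, hca, hcb]
    congr 1
    · by_cases h : c = some ca <;> simp [h, eq_comm]
    · by_cases h : c = some cb <;> simp [h, eq_comm]
  · -- positive entries
    intro i c hpos
    rcases indicator_sum m w v hdist i c with h1 | ⟨j, hj, hvj, hwj, h1⟩ <;>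
      rcases indicator_sum' m w v hdist i c with h2 | ⟨j', hj', hvj', hwj', h2⟩
    · rw [hδ] at hpos; simp only at hpos; rw [h1, h2] at hpos; norm_num at hpos
    · rw [hδ] at hpos; simp only at hpos; rw [h1, h2] at hpos; norm_num at hpos
    · constructor
      · rw [hδ]; simp only; rw [h1, h2]; norm_num
      · have := (hεa_le j hj).1
        rw [hvj, hwj] at this
        linarith
    · rw [hδ] at hpos; simp only at hpos; rw [h1, h2] at hpos; norm_num at hpos
  · -- negative entries
    intro i c hneg
    rcases indicator_sum m w v hdist i c with h1 | ⟨j, hj, hvj, hwj, h1⟩ <;>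
      rcases indicator_sum' m w v hdist i c with h2 | ⟨j', hj', hvj', hwj', h2⟩
    · rw [hδ] at hneg; simp only at hneg; rw [h1, h2] at hneg; norm_num at hneg
    · constructor
      · rw [hδ]; simp only; rw [h1, h2]; norm_num
      · have := (hεa_le j' hj').2
        rw [hvj', hwj'] at this
        linarith
    · rw [hδ] at hneg; simp only at hneg; rw [h1, h2] at hneg; norm_num at hneg
    · rw [hδ] at hneg; simp only at hneg; rw [h1, h2] at hneg; norm_num at hneg

lemma sum_opt (g : Option C → ℝ) :
    ∑ x : Option C, g x = g none + ∑ x : C, g (some x) := by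
  rw [univ_option, Finset.sum_insertNone]

/-- Feasibility, value and cost of the perturbed flow `f₂ + ε δ`. -/
lemma perturb_feasible (A : Fin n → Finset C) (e : Fin n → ℝ)
    (f₁ f₂ : Fin n → C → ℝ)
    (hf₁ : EntFeasible A e f₁) (hf₂ : EntFeasible A e f₂)
    (α : ℝ) (hv₂ : ∑ i, ∑ c, f₂ i c = α)
    (ca cb : C) (hab : ca ≠ cb) (ε : ℝ) (δ : Fin n → Option C → ℝ)
    (hε : 0 < ε)
    (hεca : ε ≤ ∑ i, f₁ i ca - ∑ i, f₂ i ca)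
    (hrowδ : ∀ i, ∑ c, δ i c = 0)
    (hcolδ : ∀ c, ∑ i, δ i c
      = (if c = some ca then 1 else 0) - (if c = some cb then 1 else 0))
    (hpos : ∀ i c, 0 < δ i (some c) → δ i (some c) = 1 ∧ f₂ i c ≤ f₁ i c - ε)
    (hneg : ∀ i c, δ i (some c) < 0 → δ i (some c) = -1 ∧ f₁ i c + ε ≤ f₂ i c)
    (hposn : ∀ i, 0 < δ i none → δ i none = 1 ∧
      (e i - ∑ c, f₂ i c) ≤ (e i - ∑ c, f₁ i c) - ε)
    (hnegn : ∀ i, δ i none < 0 → δ i none = -1 ∧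
      (e i - ∑ c, f₁ i c) + ε ≤ (e i - ∑ c, f₂ i c)) :
    EntFeasible A e (fun i c => f₂ i c + ε * δ i (some c)) ∧
    (∑ i, ∑ c, (f₂ i c + ε * δ i (some c)) = α) ∧
    ∀ cost : C → ℝ, ∑ c, cost c * ∑ i, (f₂ i c + ε * δ i (some c))
      = (∑ c, cost c * ∑ i, f₂ i c) + ε * (cost ca - cost cb) := by
  obtain ⟨h₁0, h₁A, h₁r, h₁c⟩ := hf₁
  obtain ⟨h₂0, h₂A, h₂r, h₂c⟩ := hf₂
  -- column sums of the perturbed flow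
  have hcol : ∀ c, ∑ i, (f₂ i c + ε * δ i (some c))
      = ∑ i, f₂ i c + ε * ((if c = ca then 1 else 0) - (if c = cb then 1 else 0)) := by
    intro c
    rw [Finset.sum_add_distrib, ← Finset.mul_sum, hcolδ (some c)]
    simp [Option.some.injEq]
  -- row sums of δ over genuine candidates
  have hrow₂ : ∀ i, ∑ c, δ i (some c) = - δ i none := by
    intro i
    have := hrowδ i
    rw [sum_opt (δ i)] at this
    linarith
  refine ⟨⟨?_, ?_, ?_, ?_⟩, ?_, ?_⟩
  · -- nonnegativity
    intro i c
    dsimp only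
    rcases lt_trichotomy (δ i (some c)) 0 with h | h | h
    · obtain ⟨he1, he2⟩ := hneg i c h
      rw [he1]
      have := h₁0 i c
      linarith
    · rw [h]
      have := h₂0 i c
      linarith
    · obtain ⟨he1, he2⟩ := hpos i c h
      rw [he1]
      have := h₁0 i c
      have := h₂0 i c
      linarith
  · -- approval
    intro i c hc
    dsimp only
    have hf1 : f₁ i c = 0 := h₁A i c hc
    have hf2 : f₂ i c = 0 := h₂A i c hc
    have hδ0 : δ i (some c) = 0 := by
      rcases lt_trichotomy (δ i (some c)) 0 with h | h | h
      · obtain ⟨_, he2⟩ := hneg i c h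
        exfalso
        rw [hf1, hf2] at he2
        linarith
      · exact h
      · obtain ⟨_, he2⟩ := hpos i c h
        exfalso
        rw [hf1, hf2] at he2
        linarith
    rw [hf2, hδ0]
    ring
  · -- row capacities
    intro i
    dsimp only
    rw [Finset.sum_add_distrib, ← Finset.mul_sum, hrow₂ i]
    rcases lt_trichotomy (δ i none) 0 with h | h | h
    · obtain ⟨he1, he2⟩ := hnegn i h
      rw [he1]
      have := h₁r i
      linarith
    · rw [h]
      have := h₂r i
      linarith
    · obtain ⟨he1, he2⟩ := hposn i h
      rw [he1]
      have := h₂r i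
      linarith
  · -- column capacities
    intro c
    dsimp only
    rw [hcol c]
    by_cases h1 : c = ca
    · subst h1
      rw [if_pos rfl, if_neg hab]
      have h2 : ∑ i, f₂ i c + ε ≤ ∑ i, f₁ i c := by linarith
      have := h₁c c
      linarith
    · rw [if_neg h1]
      by_cases h2 : c = cb
      · subst h2
        rw [if_pos rfl]
        have := h₂c c
        nlinarith
      · rw [if_neg h2]
        have := h₂c c
        linarith
  · -- value
    have : ∑ i, ∑ c, (f₂ i c + ε * δ i (some c))
        = α + ε * ∑ i, (- δ i none) := by
      rw [← hv₂, Finset.mul_sum, ← Finset.sum_add_distrib]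
      refine Finset.sum_congr rfl fun i _ => ?_
      rw [Finset.sum_add_distrib, ← Finset.mul_sum, hrow₂ i]
    rw [this]
    have h0 : ∑ i, (- δ i none) = 0 := by
      have := hcolδ none
      simp only [reduceCtorEq, if_false] at this
      rw [Finset.sum_neg_distrib, this]
      ring
    rw [h0]
    ring
  · -- cost
    intro cost
    have : ∀ c, cost c * ∑ i, (f₂ i c + ε * δ i (some c))
        = cost c * ∑ i, f₂ i c
          + ε * (cost c * (if c = ca then 1 else 0) - cost c * (if c = cb then 1 else 0)) := by
      intro c
      rw [hcol c]
      ring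
    rw [Finset.sum_congr rfl fun c _ => this c]
    rw [Finset.sum_add_distrib, ← Finset.mul_sum, Finset.sum_sub_distrib]
    have ha : ∑ c, cost c * (if c = ca then 1 else 0) = cost ca := by
      rw [Finset.sum_eq_single ca]
      · simp
      · intro b _ hb; simp [hb]
      · intro h; exact absurd (Finset.mem_univ ca) h
    have hb : ∑ c, cost c * (if c = cb then 1 else 0) = cost cb := by
      rw [Finset.sum_eq_single cb]
      · simp
      · intro b _ hbb; simp [hbb]
      · intro h; exact absurd (Finset.mem_univ cb) h
    rw [ha, hb]

end MFSU

/-- On an entitlement network with a sink-distinct cost function (only arcs into the sink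
have nonzero costs, all pairwise distinct, i.e. the candidate cost function is
injective), any two minimum-cost flows of the same value `α ∈ [0, k]` have identical
flows into the sink: `f(c,t) = f'(c,t)` for every candidate `c`. -/
theorem mincost_flow_sink_unique {C : Type*} [Fintype C] [DecidableEq C]
    (n k : ℕ) (hn : 0 < n) (A : Fin n → Finset C)
    (e : Fin n → ℝ) (he0 : ∀ i, 0 ≤ e i) (he : ∑ i, e i = (k : ℝ))
    (cost : C → ℝ) (hcost : Function.Injective cost)
    (α : ℝ) (hα0 : 0 ≤ α) (hαk : α ≤ (k : ℝ))
    (f f' : Fin n → C → ℝ)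
    (hf : EntFeasible A e f) (hf' : EntFeasible A e f')
    (hvf : ∑ i, ∑ c, f i c = α) (hvf' : ∑ i, ∑ c, f' i c = α)
    (hmin : ∀ g, EntFeasible A e g → ∑ i, ∑ c, g i c = α →
      ∑ c, cost c * ∑ i, f i c ≤ ∑ c, cost c * ∑ i, g i c)
    (hmin' : ∀ g, EntFeasible A e g → ∑ i, ∑ c, g i c = α →
      ∑ c, cost c * ∑ i, f' i c ≤ ∑ c, cost c * ∑ i, g i c) :
    ∀ c, ∑ i, f i c = ∑ i, f' i c := by
  classical
  intro c
  by_contra hc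
  set x : Fin n → Option C → ℝ := fun i oc =>
    Option.elim oc ((e i - ∑ c', f' i c') - (e i - ∑ c', f i c'))
      (fun c' => f' i c' - f i c') with hx
  have hxsome : ∀ i c', x i (some c') = f' i c' - f i c' := fun i c' => rfl
  have hxnone : ∀ i, x i none = (e i - ∑ c', f' i c') - (e i - ∑ c', f i c') :=
    fun i => rfl
  have hxs : ∀ c', ∑ i, x i (some c') = ∑ i, f' i c' - ∑ i, f i c' := by
    intro c'
    rw [Finset.sum_congr rfl fun i (_ : i ∈ univ) => hxsome i c', Finset.sum_sub_distrib]
  have hrow : ∀ i, ∑ oc, x i oc = 0 := by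
    intro i
    rw [MFSU.sum_opt (x i), hxnone i,
      Finset.sum_congr rfl fun c' (_ : c' ∈ univ) => hxsome i c', Finset.sum_sub_distrib]
    ring
  have hnone : ∑ i, x i none = 0 := by
    have : ∀ i, x i none = (∑ c', f i c') - (∑ c', f' i c') := by
      intro i; rw [hxnone i]; ring
    rw [Finset.sum_congr rfl fun i _ => this i, Finset.sum_sub_distrib, hvf, hvf']
    ring
  have hc0 : ∑ i, x i (some c) ≠ 0 := by
    rw [hxs c]
    exact sub_ne_zero.2 (Ne.symm hc)
  obtain ⟨ca, cb, ε, δ, hε, hab, hεca, hεcb, hrowδ, hcolδ, hposδ, hnegδ⟩ :=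
    MFSU.exists_perturbation x hrow hnone hc0
  -- first perturbation: improve f' when cost ca < cost cb
  obtain ⟨hGfeas, hGval, hGcost⟩ :=
    MFSU.perturb_feasible A e f f' hf hf' α hvf' ca cb hab ε δ hε
      (by rw [hxs ca] at hεca; linarith)
      hrowδ hcolδ
      (fun i c' h => by
        obtain ⟨h1, h2⟩ := hposδ i (some c') h
        rw [hxsome i c'] at h2
        exact ⟨h1, by linarith⟩)
      (fun i c' h => by
        obtain ⟨h1, h2⟩ := hnegδ i (some c') h
        rw [hxsome i c'] at h2
        exact ⟨h1, by linarith⟩)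
      (fun i h => by
        obtain ⟨h1, h2⟩ := hposδ i none h
        rw [hxnone i] at h2
        exact ⟨h1, by linarith⟩)
      (fun i h => by
        obtain ⟨h1, h2⟩ := hnegδ i none h
        rw [hxnone i] at h2
        exact ⟨h1, by linarith⟩)
  -- second perturbation: improve f when cost cb < cost ca
  obtain ⟨hG'feas, hG'val, hG'cost⟩ :=
    MFSU.perturb_feasible A e f' f hf' hf α hvf cb ca (Ne.symm hab) ε
      (fun i oc => - δ i oc) hε
      (by rw [hxs cb] at hεcb; linarith)
      (fun i => by rw [Finset.sum_neg_distrib, hrowδ i]; ring)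
      (fun c' => by rw [Finset.sum_neg_distrib, hcolδ c']; ring)
      (fun i c' h => by
        have h' : δ i (some c') < 0 := by linarith
        obtain ⟨h1, h2⟩ := hnegδ i (some c') h'
        rw [hxsome i c'] at h2
        exact ⟨by rw [h1]; ring, by linarith⟩)
      (fun i c' h => by
        have h' : 0 < δ i (some c') := by linarith
        obtain ⟨h1, h2⟩ := hposδ i (some c') h'
        rw [hxsome i c'] at h2
        exact ⟨by rw [h1], by linarith⟩)
      (fun i h => by
        have h' : δ i none < 0 := by linarith
        obtain ⟨h1, h2⟩ := hnegδ i none h'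
        rw [hxnone i] at h2
        exact ⟨by rw [h1]; ring, by linarith⟩)
      (fun i h => by
        have h' : 0 < δ i none := by linarith
        obtain ⟨h1, h2⟩ := hposδ i none h'
        rw [hxnone i] at h2
        exact ⟨by rw [h1], by linarith⟩)
  have hDne : cost ca ≠ cost cb := fun h => hab (hcost h)
  rcases lt_or_gt_of_ne hDne with hD | hD
  · have h1 := hmin' _ hGfeas hGval
    rw [hGcost cost] at h1
    nlinarith
  · have h1 := hmin _ hG'feas hG'val
    rw [hG'cost cost] at h1
    nlinarith
end

section
/- Affordable committees can be extended to ex-ante GRP fractional committees: if $W$ is an affordable committee, then there exists a fractional committee $\vec{p}$ satisfying group resource proportionality with $p_c = 1$ for every $c \in W$. -/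
open Finset

/-- A committee `W` is affordable if there are nonnegative per-voter payment functions
supported on approved candidates, with each voter spending at most `k/n`, such that every
candidate in `W` receives total payment exactly `1` and every other candidate `0`. -/
def Affordable {C : Type*} [Fintype C] (n k : ℕ) (A : Fin n → Finset C)
    (W : Finset C) : Prop :=
  ∃ π : Fin n → C → ℝ,
    (∀ i c, 0 ≤ π i c) ∧ (∀ i c, c ∉ A i → π i c = 0) ∧
      (∀ i, ∑ c, π i c ≤ (k : ℝ) / n) ∧
      (∀ c ∈ W, ∑ i, π i c = 1) ∧ (∀ c ∉ W, ∑ i, π i c = 0)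

/-- Every affordable committee extends to a GRP fractional committee: if `W` is
affordable, there is a fractional committee `p` satisfying group resource
proportionality with `p c = 1` for every `c ∈ W`. -/
theorem affordable_extends_to_grp {C : Type*} [Fintype C] [DecidableEq C]
    (n k : ℕ) (hn : 0 < n) (hk : k ≤ Fintype.card C)
    (A : Fin n → Finset C) (W : Finset C) (hWcard : W.card = k)
    (hW : Affordable n k A W) :
    ∃ p : C → ℝ, (∀ c, 0 ≤ p c ∧ p c ≤ 1) ∧ (∑ c, p c = (k : ℝ)) ∧
      GRP n k A p ∧ ∀ c ∈ W, p c = 1 := by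
  classical
  obtain ⟨π, hπ0, hπA, hπb, hπW, hπW'⟩ := hW
  set p : C → ℝ := fun c => if c ∈ W then 1 else 0 with hp
  have hn' : (0:ℝ) < n := by exact_mod_cast hn
  -- total payment received by a candidate
  have hrecv : ∀ c, ∑ i, π i c = if c ∈ W then (1:ℝ) else 0 := by
    intro c
    by_cases h : c ∈ W
    · simp [h, hπW c h]
    · simp [h, hπW' c h]
  -- total spending equals k
  have htotal : ∑ i : Fin n, ∑ c, π i c = (k : ℝ) := by
    rw [Finset.sum_comm]
    calc ∑ c : C, ∑ i, π i c = ∑ c : C, (if c ∈ W then (1:ℝ) else 0) :=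
          Finset.sum_congr rfl fun c _ => hrecv c
      _ = ∑ c ∈ Finset.univ ∩ W, (1:ℝ) := by rw [Finset.sum_ite_mem]
      _ = (k : ℝ) := by rw [Finset.univ_inter, Finset.sum_const, hWcard]; simp
  -- q ≤ p pointwise
  have hq_le_p : ∀ (S : Finset (Fin n)) (c : C), ∑ i ∈ S, π i c ≤ p c := by
    intro S c
    by_cases h : c ∈ W
    · have : ∑ i ∈ S, π i c ≤ ∑ i : Fin n, π i c :=
        Finset.sum_le_sum_of_subset_of_nonneg (Finset.subset_univ S)
          (fun i _ _ => hπ0 i c)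
      simp only [hp, h, if_true]
      calc ∑ i ∈ S, π i c ≤ ∑ i, π i c := this
        _ = 1 := hπW c h
    · have hzero : ∀ i ∈ (Finset.univ : Finset (Fin n)), π i c = 0 := by
        rw [← Finset.sum_eq_zero_iff_of_nonneg (fun i _ => hπ0 i c)]
        exact hπW' c h
      have : ∑ i ∈ S, π i c = 0 :=
        Finset.sum_eq_zero fun i _ => hzero i (Finset.mem_univ i)
      simp [hp, h, this]
  refine ⟨p, ?_, ?_, ?_, ?_⟩
  · intro c; by_cases h : c ∈ W <;> simp [hp, h]
  · simp only [hp]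
    rw [Finset.sum_ite_mem, Finset.univ_inter, Finset.sum_const, hWcard]
    simp
  · intro S
    have hpen : (0:ℝ) ≤ grpPenalty n k A S := by
      have h := Finset.le_sup'
        (f := fun T : Finset (Fin n) => (T.card : ℝ) * k / n - ((T.sup A).card : ℝ))
        (Finset.empty_mem_powerset S)
      simpa [grpPenalty] using h
    have key : (S.card : ℝ) * k / n ≤ ∑ c ∈ S.sup A, p c := by
      -- S spends at least |S| k / n
      have hScard : (S.card : ℕ) ≤ n := by
        simpa using Finset.card_le_card (Finset.subset_univ S)
      have hcompl : ((Sᶜ : Finset (Fin n)).card : ℝ) = (n : ℝ) - S.card := by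
        rw [Finset.card_compl]
        have : (S.card : ℕ) ≤ Fintype.card (Fin n) := by simpa using hScard
        rw [Nat.cast_sub this]
        simp
      have hcomplspend : ∑ i ∈ Sᶜ, ∑ c, π i c ≤ ((Sᶜ : Finset (Fin n)).card : ℝ) * ((k:ℝ)/n) := by
        calc ∑ i ∈ Sᶜ, ∑ c, π i c ≤ ∑ _i ∈ Sᶜ, ((k:ℝ)/n) :=
              Finset.sum_le_sum fun i _ => hπb i
          _ = ((Sᶜ : Finset (Fin n)).card : ℝ) * ((k:ℝ)/n) := by
              rw [Finset.sum_const]; simp [mul_comm]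
      have hsplit : ∑ i ∈ S, ∑ c, π i c + ∑ i ∈ Sᶜ, ∑ c, π i c = (k : ℝ) := by
        rw [Finset.sum_add_sum_compl]; exact htotal
      have hnk : (n : ℝ) * ((k:ℝ)/n) = (k:ℝ) := by field_simp
      have hSspend : (S.card : ℝ) * k / n ≤ ∑ i ∈ S, ∑ c, π i c := by
        have e1 : (S.card : ℝ) * k / n = (S.card : ℝ) * ((k:ℝ)/n) := by ring
        have e2 : ((Sᶜ : Finset (Fin n)).card : ℝ) * ((k:ℝ)/n)
            = (n:ℝ) * ((k:ℝ)/n) - (S.card : ℝ) * ((k:ℝ)/n) := by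
          rw [hcompl]; ring
        rw [e1]
        linarith
      -- spending of S is supported on S.sup A and bounded by p
      have hq0 : ∀ c ∈ (Finset.univ : Finset C), c ∉ S.sup A → ∑ i ∈ S, π i c = 0 := by
        intro c _ hc
        refine Finset.sum_eq_zero fun i hi => hπA i c fun hmem => hc ?_
        exact Finset.mem_sup.mpr ⟨i, hi, hmem⟩
      have hswap : ∑ i ∈ S, ∑ c, π i c = ∑ c : C, ∑ i ∈ S, π i c := Finset.sum_comm
      have hshrink : ∑ c : C, ∑ i ∈ S, π i c = ∑ c ∈ S.sup A, ∑ i ∈ S, π i c :=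
        (Finset.sum_subset (Finset.subset_univ _) hq0).symm
      calc (S.card : ℝ) * k / n ≤ ∑ i ∈ S, ∑ c, π i c := hSspend
        _ = ∑ c ∈ S.sup A, ∑ i ∈ S, π i c := by rw [hswap, hshrink]
        _ ≤ ∑ c ∈ S.sup A, p c := Finset.sum_le_sum fun c _ => hq_le_p S c
    linarith
  · intro c hc; simp [hp, hc]
end

section
/- Maximum Nash welfare violates GRP: in the instance with 4 voters, candidates $\{a,b,c,d\}$, $k = 2$, and approvals $A_1 = \{a,d\}$, $A_2 = A_3 = \{a,b\}$, $A_4 = \{c\}$, the fractional committee $\vec{p} = (p_a, p_b, p_c, p_d) = (1, 1/3, 2/3, 0)$ (which uniquely maximizes Nash welfare) violates GRP for $S = \{1,2,3\}$: the GRP lower bound for $S$ equals $3/2$ while $\sum_{c \in A_1 \cup A_2 \cup A_3} p_c = 4/3 < 3/2$. -/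
/-! The penalty of `S = {1,2,3}` vanishes: `T = ∅` contributes `0`, and a nonempty `T ⊆ S`
contains a voter approving two candidates, while `|T| * k / n ≤ 3/2`. So the GRP bound for `S`
is `|S| * k / n = 3/2`, but `p` puts only `1 + 1/3 + 0` on `A₁ ∪ A₂ ∪ A₃ = {a, b, d}`. -/

open Finset

theorem grpPenalty_eq_zero_of_forall_card_mul_le {C : Type*} [DecidableEq C] {n k : ℕ}
    {A : Fin n → Finset C} {S : Finset (Fin n)}
    (hS : ∀ i ∈ S, S.card * k ≤ (A i).card * n) : grpPenalty n k A S = 0 := by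
  refine le_antisymm (Finset.sup'_le _ _ fun T hT => ?_) ?_
  · rw [Finset.mem_powerset] at hT
    obtain rfl | ⟨i, hi⟩ := T.eq_empty_or_nonempty
    · simp
    have hcover : T.card * k ≤ (T.sup A).card * n :=
      calc T.card * k ≤ S.card * k := Nat.mul_le_mul_right k (Finset.card_le_card hT)
        _ ≤ (A i).card * n := hS i (hT hi)
        _ ≤ (T.sup A).card * n :=
          Nat.mul_le_mul_right n (Finset.card_le_card (Finset.le_sup (f := A) hi))
    rw [sub_nonpos]
    exact div_le_of_le_mul₀ (Nat.cast_nonneg n) (Nat.cast_nonneg _) (by exact_mod_cast hcover)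
  · simpa [grpPenalty] using
      Finset.le_sup' (fun T : Finset (Fin n) => (T.card : ℝ) * k / n - (T.sup A).card)
        (Finset.empty_mem_powerset S)

theorem not_GRP_of_sum_lt {C : Type*} [DecidableEq C] {n k : ℕ} {A : Fin n → Finset C}
    {p : C → ℝ} (S : Finset (Fin n))
    (hS : ∑ c ∈ S.sup A, p c < (S.card : ℝ) * k / n - grpPenalty n k A S) : ¬ GRP n k A p :=
  fun h => (h S).not_gt hS

-- Candidates `a, b, c, d` are `0, 1, 2, 3`; voters `1, 2, 3, 4` are `0, 1, 2, 3`.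
/-- The maximum-Nash-welfare committee violates GRP: with 4 voters, candidates
`a = 0`, `b = 1`, `c = 2`, `d = 3`, committee size `k = 2`, and approvals
`A₁ = {a,d}`, `A₂ = A₃ = {a,b}`, `A₄ = {c}`, the fractional committee
`p = (1, 1/3, 2/3, 0)` has GRP lower bound `3/2` for the group `S = {1,2,3}`
(indexed `{0,1,2}`) while `∑_{c ∈ A₁ ∪ A₂ ∪ A₃} p c = 4/3 < 3/2`; in particular `p`
violates GRP. -/
theorem nash_violates_grp :
    ((({0, 1, 2} : Finset (Fin 4)).card : ℝ) * 2 / 4 -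
        grpPenalty 4 2 (![{0, 3}, {0, 1}, {0, 1}, {2}] : Fin 4 → Finset (Fin 4))
          {0, 1, 2} = 3 / 2) ∧
    (∑ c ∈ (({0, 1, 2} : Finset (Fin 4)).sup
          (![{0, 3}, {0, 1}, {0, 1}, {2}] : Fin 4 → Finset (Fin 4))),
        (![1, 1/3, 2/3, 0] : Fin 4 → ℝ) c = 4 / 3) ∧
    ((4 : ℝ) / 3 < 3 / 2) ∧
    ¬ GRP 4 2 (![{0, 3}, {0, 1}, {0, 1}, {2}] : Fin 4 → Finset (Fin 4))
      (![1, 1/3, 2/3, 0] : Fin 4 → ℝ) := by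
  have hpen : grpPenalty 4 2 (![{0, 3}, {0, 1}, {0, 1}, {2}] : Fin 4 → Finset (Fin 4))
      {0, 1, 2} = 0 :=
    grpPenalty_eq_zero_of_forall_card_mul_le (by decide)
  have hcard : (({0, 1, 2} : Finset (Fin 4)).card : ℝ) = 3 := by simp
  have hsum : ∑ c ∈ (({0, 1, 2} : Finset (Fin 4)).sup
        (![{0, 3}, {0, 1}, {0, 1}, {2}] : Fin 4 → Finset (Fin 4))),
      (![1, 1/3, 2/3, 0] : Fin 4 → ℝ) c = 4 / 3 := by
    rw [show ({0, 1, 2} : Finset (Fin 4)).sup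
        (![{0, 3}, {0, 1}, {0, 1}, {2}] : Fin 4 → Finset (Fin 4)) = {0, 1, 3} by decide,
      Finset.sum_insert (by decide), Finset.sum_pair (by decide)]
    norm_num [Matrix.cons_val_three]
  have hlt : (4 : ℝ) / 3 < 3 / 2 := by norm_num
  refine ⟨by rw [hpen, hcard]; norm_num, hsum, hlt, not_GRP_of_sum_lt {0, 1, 2} ?_⟩
  rw [hsum, hpen, hcard]
  norm_num
end
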